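/- arXiv:2102.01526 — 11 statements merged into one kernel-verified Lean document; each statement's English description precedes it below -/
import Mathlib

section
/- Let F be a field, m,t,r positive integers, H ∈ F^{r×mt} an encoder matrix with blocks H_1,…,H_m ∈ F^{r×t}, and fix a user i ∈ {1,…,m} with interfering set B_i ⊆ {1,…,m}\{i} and side-information set A_i = {1,…,m}\(B_i∪{i}). Then there exists a decoding function ψ : F^r × F^{|A_i|t} → F^t such that ψ(Hx, (x_l)_{l∈A_i}) = x_i for every message vector x = (x_1,…,x_m) ∈ (F^t)^m (viewed as a column vector in F^{mt}) if and only if rank H_{{i}∪B_i} = rank H_{B_i} + t. -/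
open Matrix

/-- The rank of the `r × |L|t` matrix formed by horizontally concatenating the
blocks `H l`, `l ∈ L`, of the block encoder matrix `H = [H_1 | ⋯ | H_m]`. -/
noncomputable def blockRank {F : Type} [Field F] {m r t : ℕ}
    (H : Fin m → Matrix (Fin r) (Fin t) F) (L : Finset (Fin m)) : ℕ :=
  Matrix.rank (Matrix.of fun (k : Fin r) (p : {l // l ∈ L} × Fin t) => H p.1.1 k p.2)

section aux
variable {F : Type} [Field F] {m r t : ℕ} (H : Fin m → Matrix (Fin r) (Fin t) F)

/-- the block matrix -/
noncomputable def blockMat (L : Finset (Fin m)) : Matrix (Fin r) ({l // l ∈ L} × Fin t) F :=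
  Matrix.of fun (k : Fin r) (p : {l // l ∈ L} × Fin t) => H p.1.1 k p.2

lemma range_blockMat (L : Finset (Fin m)) :
    LinearMap.range (blockMat H L).mulVecLin = ⨆ l ∈ L, LinearMap.range (H l).mulVecLin := by
  simp only [Matrix.range_mulVecLin]
  rw [← Submodule.span_iUnion₂]
  congr 1
  ext v
  constructor
  · rintro ⟨p, rfl⟩
    exact Set.mem_iUnion₂.2 ⟨p.1.1, p.1.2, ⟨p.2, rfl⟩⟩
  · intro hv
    obtain ⟨l, hl, j, rfl⟩ := Set.mem_iUnion₂.1 hv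
    exact ⟨(⟨l, hl⟩, j), rfl⟩

lemma blockRank_eq (L : Finset (Fin m)) :
    blockRank H L = Module.finrank F (LinearMap.range (blockMat H L).mulVecLin) := rfl

end aux

theorem stmt0 {F : Type} [Field F] (m t r : ℕ) (hm : 0 < m) (ht : 0 < t) (hr : 0 < r)
    (H : Fin m → Matrix (Fin r) (Fin t) F) (i : Fin m)
    (B : Finset (Fin m)) (hB : i ∉ B) :
    (∃ ψ : (Fin r → F) → ({l // l ∈ Finset.univ \ insert i B} → Fin t → F) → (Fin t → F),
        ∀ x : Fin m → Fin t → F,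
          ψ (fun k => ∑ l, ∑ j, H l k j * x l j) (fun l j => x l.1 j) = x i)
      ↔ blockRank H (insert i B) = blockRank H B + t := by
  classical
  set f := (H i).mulVecLin with hf
  set g := (blockMat H B).mulVecLin with hg
  -- sum splitting lemma
  have sum_split : ∀ (x : Fin m → Fin t → F), (∀ l, l ∉ insert i B → x l = 0) → ∀ k,
      ∑ l, ∑ j, H l k j * x l j
        = f (x i) k + g (fun p => x p.1.1 p.2) k := by
    intro x hx k
    have h1 : ∑ l, ∑ j, H l k j * x l j = ∑ l ∈ insert i B, ∑ j, H l k j * x l j := by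
      refine (Finset.sum_subset (Finset.subset_univ _) ?_).symm
      intro l _ hl
      simp [hx l hl]
    rw [h1, Finset.sum_insert hB]
    have e1 : (∑ j, H i k j * x i j) = f (x i) k := by
      simp [hf, Matrix.mulVecLin_apply, Matrix.mulVec, dotProduct]
    have e2 : (∑ l ∈ B, ∑ j, H l k j * x l j) = g (fun p => x p.1.1 p.2) k := by
      rw [hg]
      simp only [Matrix.mulVecLin_apply, Matrix.mulVec, dotProduct, blockMat, Matrix.of_apply]
      rw [Fintype.sum_prod_type]
      rw [← Finset.sum_coe_sort B (fun l => ∑ j, H l k j * x l j)]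
    rw [e1, e2]
  -- the key condition
  have key : (∃ ψ : (Fin r → F) → ({l // l ∈ Finset.univ \ insert i B} → Fin t → F) → (Fin t → F),
        ∀ x : Fin m → Fin t → F,
          ψ (fun k => ∑ l, ∑ j, H l k j * x l j) (fun l j => x l.1 j) = x i)
      ↔ (∀ (c : Fin t → F) (d : {l // l ∈ B} × Fin t → F), f c + g d = 0 → c = 0) := by
    constructor
    · rintro ⟨ψ, hψ⟩ c d hcd
      set x : Fin m → Fin t → F := fun l j =>
        if h : l = i then c j else if h' : l ∈ B then d (⟨l, h'⟩, j) else 0 with hxdef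
      have hx0 : ∀ l, l ∉ insert i B → x l = 0 := by
        intro l hl
        simp only [Finset.mem_insert, not_or] at hl
        funext j
        simp [hxdef, hl.1, hl.2]
      have hxi : x i = c := by funext j; simp [hxdef]
      have hxd : (fun p : {l // l ∈ B} × Fin t => x p.1.1 p.2) = d := by
        funext p
        have : (p.1 : Fin m) ≠ i := by rintro rfl; exact hB p.1.2
        simp [hxdef, this, p.1.2]
      have h0 := hψ 0
      have hx := hψ x
      have harg1 : (fun k => ∑ l, ∑ j, H l k j * x l j)
          = (fun k => ∑ l, ∑ j, H l k j * (0 : Fin m → Fin t → F) l j) := by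
        funext k
        rw [sum_split x hx0 k, hxi, hxd]
        have := congrFun hcd k
        simpa using this
      have harg2 : (fun (l : {l // l ∈ Finset.univ \ insert i B}) j => x l.1 j)
          = (fun (l : {l // l ∈ Finset.univ \ insert i B}) j => (0 : Fin m → Fin t → F) l.1 j) := by
        funext l j
        have hl : (l : Fin m) ∉ insert i B := (Finset.mem_sdiff.1 l.2).2
        simp [hx0 l.1 hl]
      rw [harg1, harg2] at hx
      have : x i = (0 : Fin m → Fin t → F) i := hx.symm.trans h0
      rw [← hxi, this]
      rfl
    · intro hP
      -- injectivity
      have inj : ∀ x x' : Fin m → Fin t → F,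
          (fun k => ∑ l, ∑ j, H l k j * x l j) = (fun k => ∑ l, ∑ j, H l k j * x' l j) →
          (∀ l : {l // l ∈ Finset.univ \ insert i B}, x l.1 = x' l.1) →
          x i = x' i := by
        intro x x' hsum hagree
        set y : Fin m → Fin t → F := fun l j => x l j - x' l j with hydef
        have hy0 : ∀ l, l ∉ insert i B → y l = 0 := by
          intro l hl
          have : l ∈ Finset.univ \ insert i B := Finset.mem_sdiff.2 ⟨Finset.mem_univ _, hl⟩
          funext j
          simp [hydef, congrFun (hagree ⟨l, this⟩) j]
        have hyz : ∀ k, ∑ l, ∑ j, H l k j * y l j = 0 := by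
          intro k
          simp only [hydef, mul_sub, Finset.sum_sub_distrib]
          rw [congrFun hsum k]; ring
        have hkey : f (y i) + g (fun p => y p.1.1 p.2) = 0 := by
          funext k
          show f (y i) k + g (fun p => y p.1.1 p.2) k = 0
          rw [← sum_split y hy0 k]
          exact hyz k
        have hc := hP (y i) _ hkey
        funext j
        have h2 : y i j = 0 := congrFun hc j
        exact sub_eq_zero.mp h2
      refine ⟨fun yv a => if h : ∃ x : Fin m → Fin t → F,
          (fun k => ∑ l, ∑ j, H l k j * x l j) = yv ∧
          (fun (l : {l // l ∈ Finset.univ \ insert i B}) j => x l.1 j) = a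
          then h.choose i else 0, ?_⟩
      intro x
      have hex : ∃ x' : Fin m → Fin t → F,
          (fun k => ∑ l, ∑ j, H l k j * x' l j) = (fun k => ∑ l, ∑ j, H l k j * x l j) ∧
          (fun (l : {l // l ∈ Finset.univ \ insert i B}) j => x' l.1 j)
            = (fun l j => x l.1 j) := ⟨x, rfl, rfl⟩
      beta_reduce
      rw [dif_pos hex]
      exact inj _ x hex.choose_spec.1 (fun l => funext fun j => congrFun (congrFun hex.choose_spec.2 l) j)
  rw [key]
  -- now the rank part
  have hIns : blockRank H (insert i B)
      = Module.finrank F ↥(LinearMap.range f ⊔ LinearMap.range g) := by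
    rw [blockRank_eq, range_blockMat, Finset.iSup_insert, ← range_blockMat]
  have hBr : blockRank H B = Module.finrank F (LinearMap.range g) := blockRank_eq H B
  have hrn : Module.finrank F ↥(LinearMap.range f) + Module.finrank F ↥(LinearMap.ker f) = t := by
    rw [LinearMap.finrank_range_add_finrank_ker f, Module.finrank_fin_fun]
  have hsupinf : Module.finrank F ↥(LinearMap.range f ⊔ LinearMap.range g)
        + Module.finrank F ↥(LinearMap.range f ⊓ LinearMap.range g)
      = Module.finrank F ↥(LinearMap.range f) + Module.finrank F ↥(LinearMap.range g) :=
    Submodule.finrank_sup_add_finrank_inf_eq _ _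
  rw [hIns, hBr]
  constructor
  · intro hP
    have kerbot : LinearMap.ker f = ⊥ := by
      rw [LinearMap.ker_eq_bot']
      intro c hc
      exact hP c 0 (by rw [map_zero, hc, add_zero])
    have infbot : LinearMap.range f ⊓ LinearMap.range g = ⊥ := by
      rw [Submodule.eq_bot_iff]
      rintro v ⟨⟨c, hc⟩, ⟨d, hd⟩⟩
      have : f c + g (-d) = 0 := by rw [map_neg, hc, hd]; exact add_neg_cancel v
      have hc0 := hP c (-d) this
      rw [← hc, hc0, map_zero]
    rw [kerbot, finrank_bot F (Fin t → F)] at hrn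
    rw [infbot, finrank_bot F (Fin r → F)] at hsupinf
    omega
  · intro hrank
    have hle : Module.finrank F ↥(LinearMap.range f) ≤ t := by omega
    have hinf0 : Module.finrank F ↥(LinearMap.range f ⊓ LinearMap.range g) = 0 := by omega
    have hker0 : Module.finrank F ↥(LinearMap.ker f) = 0 := by omega
    have kerbot : LinearMap.ker f = ⊥ := Submodule.finrank_eq_zero.mp hker0
    have infbot : LinearMap.range f ⊓ LinearMap.range g = ⊥ :=
      Submodule.finrank_eq_zero.mp hinf0
    intro c d hcd
    have hmem : f c ∈ LinearMap.range f ⊓ LinearMap.range g :=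
      ⟨⟨c, rfl⟩, ⟨-d, by rw [map_neg]; linear_combination (norm := abel) -hcd⟩⟩
    rw [infbot, Submodule.mem_bot] at hmem
    have : c ∈ LinearMap.ker f := hmem
    rw [kerbot, Submodule.mem_bot] at this
    exact this
end

section
/- (Lemma 1) Let F be a field, m,t,r positive integers, H ∈ F^{r×mt} an encoder matrix with blocks H_1,…,H_m ∈ F^{r×t}, and for each i ∈ {1,…,m} let B_i ⊆ {1,…,m}\{i} be its interfering set. Suppose L = {l_1,…,l_n} ⊆ {1,…,m} is an acyclic set, i.e., its elements can be ordered so that {l_{j+1},…,l_n} ⊆ B_{l_j} for every j ∈ {1,…,n}. If for every i ∈ L and every subset B' ⊆ B_i one has rank H_{{i}∪B'} = rank H_{B'} + t, then rank H_L = |L|·t = n·t. -/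
open Matrix

theorem stmt2 {F : Type} [Field F] (m t r n : ℕ) (hm : 0 < m) (ht : 0 < t) (hr : 0 < r)
    (H : Fin m → Matrix (Fin r) (Fin t) F)
    (B : Fin m → Finset (Fin m)) (hB : ∀ i, i ∉ B i)
    (l : Fin n → Fin m) (hinj : Function.Injective l)
    (hacyc : ∀ j k : Fin n, j < k → l k ∈ B (l j))
    (hdec : ∀ i ∈ Finset.image l Finset.univ, ∀ B' ⊆ B i,
      blockRank H (insert i B') = blockRank H B' + t) :
    blockRank H (Finset.image l Finset.univ) = n * t := by
  induction n with
  | zero =>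
    have h0 : (Finset.image l Finset.univ : Finset (Fin m)) = ∅ := by simp
    rw [h0]
    have hle := Matrix.rank_le_card_width
      (Matrix.of fun (k : Fin r) (p : {x // x ∈ (∅ : Finset (Fin m))} × Fin t) => H p.1.1 k p.2)
    simpa [blockRank] using hle
  | succ n ih =>
    set L' := Finset.image (l ∘ Fin.succ) Finset.univ with hL'
    have hsub : L' ⊆ Finset.image l Finset.univ := by
      intro x hx
      simp only [hL', Finset.mem_image, Finset.mem_univ, true_and, Function.comp] at hx ⊢
      obtain ⟨k, hk⟩ := hx
      exact ⟨k.succ, hk⟩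
    have hLeq : Finset.image l Finset.univ = insert (l 0) L' := by
      ext x
      simp only [Finset.mem_image, Finset.mem_univ, true_and, Finset.mem_insert, hL',
        Function.comp]
      constructor
      · rintro ⟨k, rfl⟩
        rcases Fin.eq_zero_or_eq_succ k with rfl | ⟨j, rfl⟩
        · exact Or.inl rfl
        · exact Or.inr ⟨j, rfl⟩
      · rintro (rfl | ⟨j, rfl⟩)
        · exact ⟨0, rfl⟩
        · exact ⟨j.succ, rfl⟩
    have hsubB : L' ⊆ B (l 0) := by
      intro x hx
      simp only [hL', Finset.mem_image, Finset.mem_univ, true_and, Function.comp] at hx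
      obtain ⟨k, rfl⟩ := hx
      exact hacyc 0 k.succ (Fin.succ_pos k)
    have hstep := hdec (l 0) (Finset.mem_image_of_mem l (Finset.mem_univ 0)) L' hsubB
    have hIH : blockRank H L' = n * t := by
      apply ih (l ∘ Fin.succ)
      · exact hinj.comp (Fin.succ_injective n)
      · intro j k hjk
        exact hacyc j.succ k.succ (by simpa using hjk)
      · intro i hi B' hB'
        exact hdec i (hsub hi) B' hB'
    rw [hLeq, hstep, hIH]
    ring
end

section
/- (Lemma 2) Let F be a field, m,t,r positive integers, H ∈ F^{r×mt} an encoder matrix with blocks H_1,…,H_m ∈ F^{r×t}, and L ⊆ {1,…,m} with |L| ≥ 2. Suppose that rank H_{L\{j}} = (|L|−1)·t for every j ∈ L (as holds when L is a minimal cyclic set and the decoding conditions are met), and that rank H_L = (|L|−1)·t. Then for every l ∈ L there exist t×t matrices M_{l,j} ∈ F^{t×t}, j ∈ L\{l}, such that H_l = Σ_{j∈L\{l}} H_j M_{l,j} and every matrix M_{l,j} is invertible. -/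
/-!
The columns of `H_{L∖{l}}` lie in the column space of `H_L`, and both matrices have rank
`(|L|-1)t`, so the two column spaces coincide. Hence every column of `H_l` is a combination of
columns of the `H_j`, `j ≠ l`, which produces the `M_{l,j}`. If `M_{l,j₀} v = 0` with `v ≠ 0`, then
`H_l v - ∑_{j ≠ l, j₀} H_j M_{l,j} v = 0` is a nontrivial relation among the blocks indexed by
`L∖{j₀}`, contradicting the full column rank of `H_{L∖{j₀}}`.
-/

open Matrix

namespace Matrix

variable {K : Type*} [Field K] {m n p : Type*} [Fintype n]

theorem mulVec_injective_of_rank_eq_card {A : Matrix m n K} (h : A.rank = Fintype.card n) :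
    Function.Injective A.mulVec := by
  rw [mulVec_injective_iff, linearIndependent_iff_card_eq_finrank_span, ← h,
    rank_eq_finrank_span_cols, Set.finrank]

theorem exists_eq_mul_of_range_col_subset {A : Matrix m n K} {G : Matrix m p K}
    (h : Set.range G.col ⊆ LinearMap.range A.mulVecLin) : ∃ X : Matrix n p K, G = A * X := by
  choose x hx using fun q => h ⟨q, rfl⟩
  exact ⟨(of x)ᵀ, ext fun k q => (congrFun (hx q) k).symm⟩

end Matrix

section BlockMatrix

variable {F : Type} {m r t : ℕ} (H : Fin m → Matrix (Fin r) (Fin t) F)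

def blockMatrix (S : Finset (Fin m)) : Matrix (Fin r) ({l // l ∈ S} × Fin t) F :=
  of fun k p => H p.1.1 k p.2

variable {H} in
theorem range_col_blockMatrix_mono {S T : Finset (Fin m)} (hST : S ⊆ T) :
    Set.range (blockMatrix H S).col ⊆ Set.range (blockMatrix H T).col := by
  rintro _ ⟨⟨⟨j, hj⟩, q⟩, rfl⟩
  exact ⟨(⟨j, hST hj⟩, q), rfl⟩

variable {H} in
theorem range_col_subset_range_col_blockMatrix {S : Finset (Fin m)} {l : Fin m} (hl : l ∈ S) :
    Set.range (H l).col ⊆ Set.range (blockMatrix H S).col := by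
  rintro _ ⟨q, rfl⟩
  exact ⟨(⟨l, hl⟩, q), rfl⟩

variable [Field F]

def BlocksIndependent (S : Finset (Fin m)) : Prop :=
  ∀ x : Fin m → Fin t → F, ∑ j ∈ S, H j *ᵥ x j = 0 → ∀ j ∈ S, x j = 0

variable {H}

theorem blockMatrix_mul {S : Finset (Fin m)} {n : Type*} (X : Matrix ({l // l ∈ S} × Fin t) n F) :
    blockMatrix H S * X = ∑ j : {l // l ∈ S}, H j * of fun p q => X (j, p) q := by
  ext k q
  simp [blockMatrix, mul_apply, Matrix.sum_apply, Fintype.sum_prod_type]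

theorem blockMatrix_mulVec {S : Finset (Fin m)} (x : {l // l ∈ S} × Fin t → F) :
    blockMatrix H S *ᵥ x = ∑ j : {l // l ∈ S}, H j *ᵥ fun p => x (j, p) := by
  ext k
  simp [blockMatrix, mulVec, dotProduct, Finset.sum_apply, Fintype.sum_prod_type]

theorem blockRank_eq_rank_blockMatrix (S : Finset (Fin m)) :
    blockRank H S = (blockMatrix H S).rank := rfl

theorem blocksIndependent_of_blockRank_eq {S : Finset (Fin m)}
    (h : blockRank H S = S.card * t) : BlocksIndependent H S := by
  intro x hx j hj
  have hinj := mulVec_injective_of_rank_eq_card (A := blockMatrix H S) <| by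
    rw [← blockRank_eq_rank_blockMatrix, h]
    simp
  have hzero : (fun p : {l // l ∈ S} × Fin t => x p.1 p.2) = 0 :=
    hinj (by rw [blockMatrix_mulVec, mulVec_zero, Finset.sum_coe_sort S fun j => H j *ᵥ x j, hx])
  exact funext fun p => congrFun hzero (⟨j, hj⟩, p)

theorem exists_eq_sum_mul_of_range_col_subset {S : Finset (Fin m)} {G : Matrix (Fin r) (Fin t) F}
    (h : Set.range G.col ⊆ Submodule.span F (Set.range (blockMatrix H S).col)) :
    ∃ M : Fin m → Matrix (Fin t) (Fin t) F, G = ∑ j ∈ S, H j * M j := by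
  rw [← range_mulVecLin] at h
  obtain ⟨X, rfl⟩ := exists_eq_mul_of_range_col_subset h
  refine ⟨fun j => if hj : j ∈ S then of fun p q => X (⟨j, hj⟩, p) q else 0, ?_⟩
  rw [blockMatrix_mul, ← Finset.sum_coe_sort S]
  exact Finset.sum_congr rfl fun j _ => by simp [j.2]

theorem isUnit_of_eq_sum_mul_of_blocksIndependent {L : Finset (Fin m)} {l j₀ : Fin m}
    {M : Fin m → Matrix (Fin t) (Fin t) F} (hl : l ∈ L) (hj₀ : j₀ ∈ L.erase l)
    (hHl : H l = ∑ j ∈ L.erase l, H j * M j) (hind : BlocksIndependent H (L.erase j₀)) :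
    IsUnit (M j₀) := by
  rw [isUnit_iff_isUnit_det, isUnit_iff_ne_zero]
  intro hdet
  obtain ⟨v, hv0, hv⟩ := exists_mulVec_eq_zero_iff.mpr hdet
  set x : Fin m → Fin t → F := fun j => if j = l then v else -(M j *ᵥ v)
  have hsum : ∑ j ∈ L, H j *ᵥ x j = 0 := by
    have hterm : ∀ j ∈ L.erase l, H j *ᵥ x j = -((H j * M j) *ᵥ v) := fun j hj => by
      simp [x, Finset.ne_of_mem_erase hj, mulVec_neg, mulVec_mulVec]
    rw [← Finset.add_sum_erase L _ hl, Finset.sum_congr rfl hterm, Finset.sum_neg_distrib,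
      ← sum_mulVec, ← hHl, show x l = v from if_pos rfl, add_neg_cancel]
  have hx₀ : x j₀ = 0 := by simp [x, Finset.ne_of_mem_erase hj₀, hv]
  have hl' : l ∈ L.erase j₀ := Finset.mem_erase.mpr ⟨(Finset.ne_of_mem_erase hj₀).symm, hl⟩
  have := hind x (by rwa [Finset.sum_erase _ (by rw [hx₀, mulVec_zero])]) l hl'
  simp only [x, if_pos rfl] at this
  exact hv0 this

end BlockMatrix

theorem stmt3_general {F : Type} [Field F] (m t r : ℕ)
    (H : Fin m → Matrix (Fin r) (Fin t) F)
    (L : Finset (Fin m))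
    (herase : ∀ j ∈ L, blockRank H (L.erase j) = (L.card - 1) * t)
    (hrank : blockRank H L = (L.card - 1) * t) :
    ∀ l ∈ L, ∃ M : Fin m → Matrix (Fin t) (Fin t) F,
      H l = ∑ j ∈ L.erase l, H j * M j ∧ ∀ j ∈ L.erase l, IsUnit (M j) := by
  intro l hl
  have hspan : Submodule.span F (Set.range (blockMatrix H (L.erase l)).col) =
      Submodule.span F (Set.range (blockMatrix H L).col) :=
    Submodule.eq_of_le_of_finrank_eq
      (Submodule.span_mono (range_col_blockMatrix_mono (L.erase_subset l)))
      (by rw [← rank_eq_finrank_span_cols, ← rank_eq_finrank_span_cols,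
        ← blockRank_eq_rank_blockMatrix, ← blockRank_eq_rank_blockMatrix, herase l hl, hrank])
  obtain ⟨M, hM⟩ := exists_eq_sum_mul_of_range_col_subset (S := L.erase l) (G := H l) <| by
    rw [hspan]
    exact (range_col_subset_range_col_blockMatrix hl).trans Submodule.subset_span
  refine ⟨M, hM, fun j hj => isUnit_of_eq_sum_mul_of_blocksIndependent hl hj hM
    (blocksIndependent_of_blockRank_eq ?_)⟩
  rw [herase j (Finset.mem_of_mem_erase hj), Finset.card_erase_of_mem (Finset.mem_of_mem_erase hj)]

theorem stmt3 {F : Type} [Field F] (m t r : ℕ) (hm : 0 < m) (ht : 0 < t) (hr : 0 < r)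
    (H : Fin m → Matrix (Fin r) (Fin t) F)
    (L : Finset (Fin m)) (hL : 2 ≤ L.card)
    (herase : ∀ j ∈ L, blockRank H (L.erase j) = (L.card - 1) * t)
    (hrank : blockRank H L = (L.card - 1) * t) :
    ∀ l ∈ L, ∃ M : Fin m → Matrix (Fin t) (Fin t) F,
      H l = ∑ j ∈ L.erase l, H j * M j ∧ ∀ j ∈ L.erase l, IsUnit (M j) :=
  stmt3_general m t r H L herase hrank
end

section
/- (Lemma 3) Let F be a field, m,t,r positive integers, H ∈ F^{r×mt} an encoder matrix with blocks H_1,…,H_m ∈ F^{r×t}. Let L ⊆ {1,…,m} with rank H_L = |L|·t, let l ∈ L, and let j ∈ {1,…,m}\L with rank H_j = t and rank H_{{j}∪L} = |L|·t. Suppose that for every i ∈ L\{l}: rank H_{{i}∪({j}∪(L\{i}))} = rank H_{{j}∪(L\{i})} + t (the decoding condition of user i when {j}∪(L\{i}) is contained in its interfering set). Then there exists an invertible matrix M ∈ F^{t×t} such that H_j = H_l M. -/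
/-!
Let `V i` be the column space of `H i`. The rank condition on `H_L` says that the `V i`, `i ∈ L`,
are independent, so the spans of subfamilies of them intersect like their index sets. The rank
condition on `H_{{j}∪L}` puts `V j` inside the span of `V_L`, and the decoding condition of user
`i` puts it inside the span of `V_{L\{i}}`; intersecting over `i ≠ l` leaves `V j ≤ V l`. Hence
`H j = H l * M`, and `M` is invertible because `H j` has full column rank `t`.
-/

open Matrix

open Module

namespace Submodule

variable {K E ι : Type*} [DivisionRing K] [AddCommGroup E] [Module K E] [FiniteDimensional K E]
  [DecidableEq ι] (V : ι → Submodule K E)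

theorem finrank_finsetSup_le_sum (S : Finset ι) :
    finrank K ↥(S.sup V) ≤ ∑ i ∈ S, finrank K (V i) := by
  induction S using Finset.induction_on with
  | empty => simp
  | insert a S haS ih =>
    rw [Finset.sup_insert, Finset.sum_insert haS]
    exact (finrank_add_le_finrank_add_finrank _ _).trans (Nat.add_le_add_left ih _)

variable {V} {L : Finset ι}

/- The hypothesis `hL` of the following lemmas says that `V` is independent on `L`. -/

theorem finrank_finsetSup_of_subset (hL : finrank K ↥(L.sup V) = ∑ i ∈ L, finrank K (V i))
    {S : Finset ι} (hS : S ⊆ L) :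
    finrank K ↥(S.sup V) = ∑ i ∈ S, finrank K (V i) := by
  have hsplit :
      finrank K ↥(L.sup V) ≤ finrank K ↥(S.sup V) + ∑ i ∈ L \ S, finrank K (V i) := by
    rw [← Finset.union_sdiff_of_subset hS, Finset.sup_union, Finset.union_sdiff_of_subset hS]
    exact (finrank_add_le_finrank_add_finrank _ _).trans
      (Nat.add_le_add_left (finrank_finsetSup_le_sum V _) _)
  rw [hL, ← Finset.sum_sdiff hS] at hsplit
  exact le_antisymm (finrank_finsetSup_le_sum V S) (by omega)

theorem finsetSup_inf_finsetSup (hL : finrank K ↥(L.sup V) = ∑ i ∈ L, finrank K (V i))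
    {A B : Finset ι} (hA : A ⊆ L) (hB : B ⊆ L) :
    A.sup V ⊓ B.sup V = (A ∩ B).sup V := by
  refine (eq_of_le_of_finrank_le (le_inf (Finset.sup_mono Finset.inter_subset_left)
    (Finset.sup_mono Finset.inter_subset_right)) ?_).symm
  have hdim := finrank_sup_add_finrank_inf_eq (A.sup V) (B.sup V)
  rw [← Finset.sup_union, finrank_finsetSup_of_subset hL hA, finrank_finsetSup_of_subset hL hB,
    finrank_finsetSup_of_subset hL (Finset.union_subset hA hB),
    ← Finset.sum_union_inter (s₁ := A)] at hdim
  rw [finrank_finsetSup_of_subset hL (Finset.inter_subset_left.trans hA)]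
  omega

theorem le_of_le_finsetSup_erase (hL : finrank K ↥(L.sup V) = ∑ i ∈ L, finrank K (V i))
    {U : Submodule K E} {l : ι} (hl : l ∈ L) (hU : U ≤ L.sup V)
    (hUerase : ∀ i ∈ L.erase l, U ≤ (L.erase i).sup V) : U ≤ V l := by
  suffices h : ∀ T ⊆ L.erase l, U ≤ (L \ T).sup V by
    simpa [Finset.sdiff_erase_self hl] using h _ le_rfl
  intro T
  induction T using Finset.induction_on with
  | empty => simpa using fun _ : ∅ ⊆ L.erase l => hU
  | insert a T haT ih =>
    intro hT
    have haL := hT (Finset.mem_insert_self a T)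
    have h := le_inf (ih ((Finset.subset_insert a T).trans hT)) (hUerase a haL)
    rwa [finsetSup_inf_finsetSup hL Finset.sdiff_subset (Finset.erase_subset _ _),
      Finset.inter_erase, Finset.inter_eq_left.mpr Finset.sdiff_subset,
      ← Finset.sdiff_insert] at h

theorem le_finsetSup_of_finrank_insert_le {S : Finset ι} {j : ι}
    (h : finrank K ↥((insert j S).sup V) ≤ finrank K ↥(S.sup V)) : V j ≤ S.sup V := by
  rw [Finset.sup_insert] at h
  exact sup_eq_right.mp (eq_of_le_of_finrank_le le_sup_right h).symm

end Submodule

namespace Matrix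

variable {K : Type*} [Field K] {m n o : Type*} [Fintype n] [Fintype o]

theorem isUnit_of_rank_eq_card [DecidableEq n] {A : Matrix n n K} (h : A.rank = Fintype.card n) :
    IsUnit A := by
  refine mulVec_surjective_iff_isUnit.mp (LinearMap.range_eq_top (f := A.mulVecLin) |>.mp ?_)
  exact Submodule.eq_top_of_finrank_eq (by rw [← rank, h, finrank_fintype_fun_eq_card])

theorem exists_eq_mul_of_range_le [DecidableEq o] {A : Matrix m n K} {B : Matrix m o K}
    (h : LinearMap.range B.mulVecLin ≤ LinearMap.range A.mulVecLin) : ∃ M, B = A * M := by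
  choose u hu using fun c => h ⟨Pi.single c 1, rfl⟩
  refine ⟨(of u)ᵀ, ext fun a c => ?_⟩
  have hcol := congrFun (hu c) a
  simp only [mulVecLin_apply, mulVec_single_one] at hcol
  exact hcol.symm

end Matrix

theorem blockRank_eq_finrank_finsetSup {F : Type} [Field F] {m r t : ℕ}
    (H : Fin m → Matrix (Fin r) (Fin t) F) (S : Finset (Fin m)) :
    blockRank H S = finrank F ↥(S.sup fun i => LinearMap.range (H i).mulVecLin) := by
  have hrange : LinearMap.range (of fun (k : Fin r) (p : {l // l ∈ S} × Fin t) =>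
      H p.1.1 k p.2).mulVecLin = S.sup fun i => LinearMap.range (H i).mulVecLin := by
    simp only [range_mulVecLin, Finset.sup_eq_iSup, ← Submodule.span_iUnion₂]
    congr 1
    ext v
    simp [Prod.exists, funext_iff]
  rw [blockRank, rank, hrange]

open Submodule in
theorem stmt4_general {F : Type} [Field F] (m t r : ℕ)
    (H : Fin m → Matrix (Fin r) (Fin t) F)
    (L : Finset (Fin m)) (hrankL : blockRank H L = L.card * t)
    (l : Fin m) (hl : l ∈ L) (j : Fin m)
    (hrankj : (H j).rank = t) (hrankjL : blockRank H (insert j L) = L.card * t)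
    (hdec : ∀ i ∈ L.erase l,
      blockRank H (insert i (insert j (L.erase i)))
        = blockRank H (insert j (L.erase i)) + t) :
    ∃ M : Matrix (Fin t) (Fin t) F, IsUnit M ∧ H j = H l * M := by
  set V : Fin m → Submodule F (Fin r → F) := fun i => LinearMap.range (H i).mulVecLin
  have hdim : ∀ S, blockRank H S = finrank F ↥(S.sup V) := blockRank_eq_finrank_finsetSup H
  have hVt : ∀ i, finrank F ↥(V i) ≤ t := fun i => (H i).rank_le_width
  rw [hdim] at hrankL hrankjL
  have hindep : finrank F ↥(L.sup V) = ∑ i ∈ L, finrank F ↥(V i) := by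
    refine le_antisymm (finrank_finsetSup_le_sum V L) ?_
    calc ∑ i ∈ L, finrank F ↥(V i) ≤ ∑ _i ∈ L, t := Finset.sum_le_sum fun i _ => hVt i
      _ = finrank F ↥(L.sup V) := by rw [hrankL, Finset.sum_const, smul_eq_mul]
  have hjL : V j ≤ L.sup V := le_finsetSup_of_finrank_insert_le (by rw [hrankjL, hrankL])
  have hjErase : ∀ i ∈ L.erase l, V j ≤ (L.erase i).sup V := by
    intro i hi
    have hiL := Finset.mem_of_mem_erase hi
    have hdeci := hdec i hi
    rw [Finset.insert_comm, Finset.insert_erase hiL, hdim, hdim, hrankjL] at hdeci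
    have hsplit :
        finrank F ↥(L.sup V) = finrank F ↥((L.erase i).sup V) + finrank F ↥(V i) := by
      rw [hindep, finrank_finsetSup_of_subset hindep (Finset.erase_subset i L),
        Finset.sum_erase_add _ _ hiL]
    have hVi := hVt i
    exact le_finsetSup_of_finrank_insert_le (by omega)
  obtain ⟨M, hM⟩ :=
    Matrix.exists_eq_mul_of_range_le (le_of_le_finsetSup_erase hindep hl hjL hjErase)
  refine ⟨M, Matrix.isUnit_of_rank_eq_card (le_antisymm M.rank_le_card_width ?_), hM⟩
  calc Fintype.card (Fin t) = (H j).rank := by rw [hrankj, Fintype.card_fin]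
    _ ≤ M.rank := hM ▸ Matrix.rank_mul_le_right _ _

theorem stmt4 {F : Type} [Field F] (m t r : ℕ) (hm : 0 < m) (ht : 0 < t) (hr : 0 < r)
    (H : Fin m → Matrix (Fin r) (Fin t) F)
    (L : Finset (Fin m)) (hrankL : blockRank H L = L.card * t)
    (l : Fin m) (hl : l ∈ L) (j : Fin m) (hj : j ∉ L)
    (hrankj : (H j).rank = t) (hrankjL : blockRank H (insert j L) = L.card * t)
    (hdec : ∀ i ∈ L.erase l,
      blockRank H (insert i (insert j (L.erase i)))
        = blockRank H (insert j (L.erase i)) + t) :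
    ∃ M : Matrix (Fin t) (Fin t) F, IsUnit M ∧ H j = H l * M :=
  stmt4_general m t r H L hrankL l hl j hrankj hrankjL hdec
end

section
/- Let F be a field, t a positive integer, and suppose there exist invertible matrices M_1, M_2, M_4, M_5, M_6, M_8, M_{10}, M_{11}, M_{12}, M_{13}, M_{14} ∈ F^{t×t} satisfying the six relations M_{11}M_4 = M_{13}M_{10}, M_2M_8 = M_{14}M_{10}, M_{12}M_4 = M_1M_8, M_{13} = M_{11}M_5, M_{14} = M_2M_6, and M_{12}M_5 + M_1M_6 = 0. Then the characteristic of F is 2. -/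
open Matrix

theorem stmt8 {F : Type} [Field F] (t : ℕ) (ht : 0 < t)
    (M1 M2 M4 M5 M6 M8 M10 M11 M12 M13 M14 : Matrix (Fin t) (Fin t) F)
    (hM1 : IsUnit M1) (hM2 : IsUnit M2) (hM4 : IsUnit M4) (hM5 : IsUnit M5)
    (hM6 : IsUnit M6) (hM8 : IsUnit M8) (hM10 : IsUnit M10) (hM11 : IsUnit M11)
    (hM12 : IsUnit M12) (hM13 : IsUnit M13) (hM14 : IsUnit M14)
    (e1 : M11 * M4 = M13 * M10)
    (e2 : M2 * M8 = M14 * M10)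
    (e3 : M12 * M4 = M1 * M8)
    (e4 : M13 = M11 * M5)
    (e5 : M14 = M2 * M6)
    (e6 : M12 * M5 + M1 * M6 = 0) :
    ringChar F = 2 := by
  have h4 : M4 = M5 * M10 := by
    apply hM11.mul_left_cancel
    rw [e1, e4, mul_assoc]
  have h8 : M8 = M6 * M10 := by
    apply hM2.mul_left_cancel
    rw [e2, e5, mul_assoc]
  have key : M12 * M5 = M1 * M6 := by
    apply hM10.mul_right_cancel
    rw [mul_assoc, mul_assoc, ← h4, ← h8, e3]
  rw [key] at e6
  have hX : IsUnit (M1 * M6) := hM1.mul hM6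
  obtain ⟨u, hu⟩ := hX
  rw [← hu] at e6
  have h2 : (1 + 1 : Matrix (Fin t) (Fin t) F) = 0 := by
    calc (1 + 1 : Matrix (Fin t) (Fin t) F)
        = ((u : Matrix (Fin t) (Fin t) F) + u) * ((u⁻¹ : (Matrix (Fin t) (Fin t) F)ˣ) : Matrix (Fin t) (Fin t) F) := by
          rw [add_mul, u.mul_inv]
      _ = 0 := by rw [e6, zero_mul]
  have i : Fin t := ⟨0, ht⟩
  have h2F : (2 : F) = 0 := by
    have := congrFun (congrFun h2 i) i
    simpa [Matrix.add_apply, Matrix.one_apply_eq, one_add_one_eq_two] using this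
  exact CharP.ringChar_of_prime_eq_zero Nat.prime_two h2F
end

section
/- (Optimality of binary linear coding for I1) The binary map y : F_2^10 → F_2^6 is a valid (1,6) index code for the instance I1: for every user i ∈ {1,…,10} and all x, x' ∈ F_2^10, if y(x) = y(x') and x_l = x'_l for all l ∈ A_i, then x_i = x'_i. -/
/-- Side-information sets of the 10-user instance `I1` (0-based indexing:
user `i : Fin 10` corresponds to user `i+1` of the paper). -/
def I1sideInfo : Fin 10 → Finset (Fin 10) :=
  ![{3, 5, 6}, {0, 4, 5}, {0, 1, 6}, {1, 2, 5}, {0, 2, 3}, {2, 4, 6}, {1, 3, 4}, ∅, ∅, ∅]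

/-- The scalar binary linear encoding map `y : F_2^10 → F_2^6` for `I1`. -/
def yEnc (x : Fin 10 → ZMod 2) : Fin 6 → ZMod 2 :=
  ![x 0 + x 3 + x 5 + x 6,
    x 1 + x 3 + x 4 + x 6,
    x 2 + x 4 + x 5 + x 6,
    x 7, x 8, x 9]

theorem stmt9 :
    ∀ (i : Fin 10) (x x' : Fin 10 → ZMod 2),
      yEnc x = yEnc x' → (∀ l ∈ I1sideInfo i, x l = x' l) → x i = x' i := by
  intro i x x' h hs
  have h0 := congrFun h 0
  have h1 := congrFun h 1
  have h2 := congrFun h 2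
  have h3 := congrFun h 3
  have h4 := congrFun h 4
  have h5 := congrFun h 5
  simp [yEnc, Matrix.cons_val_succ] at h0 h1 h2 h3 h4 h5
  have two : (2 : ZMod 2) = 0 := rfl
  fin_cases i
  · have a3 := hs 3 (by decide); have a5 := hs 5 (by decide); have a6 := hs 6 (by decide)
    show x 0 = x' 0
    linear_combination h0 - a3 - a5 - a6
  · have a0 := hs 0 (by decide); have a4 := hs 4 (by decide); have a5 := hs 5 (by decide)
    show x 1 = x' 1
    linear_combination h0 + h1 - a0 - a4 - a5 - (x 3 + x 6 - x' 3 - x' 6) * two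
  · have a0 := hs 0 (by decide); have a1 := hs 1 (by decide); have a6 := hs 6 (by decide)
    show x 2 = x' 2
    linear_combination h0 + h1 + h2 - a0 - a1 - a6 -
      (x 3 + x 4 + x 5 + x 6 - x' 3 - x' 4 - x' 5 - x' 6) * two
  · have a1 := hs 1 (by decide); have a2 := hs 2 (by decide); have a5 := hs 5 (by decide)
    show x 3 = x' 3
    linear_combination h1 + h2 - a1 - a2 - a5 - (x 4 + x 6 - x' 4 - x' 6) * two
  · have a0 := hs 0 (by decide); have a2 := hs 2 (by decide); have a3 := hs 3 (by decide)
    show x 4 = x' 4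
    linear_combination h0 + h2 - a0 - a2 - a3 - (x 5 + x 6 - x' 5 - x' 6) * two
  · have a2 := hs 2 (by decide); have a4 := hs 4 (by decide); have a6 := hs 6 (by decide)
    show x 5 = x' 5
    linear_combination h2 - a2 - a4 - a6
  · have a1 := hs 1 (by decide); have a3 := hs 3 (by decide); have a4 := hs 4 (by decide)
    show x 6 = x' 6
    linear_combination h1 - a1 - a3 - a4
  · exact h3
  · exact h4
  · exact h5
end

section
/- (MAIS lower bound) Let X be a finite alphabet with |X| ≥ 2, m,t,r positive integers, and consider an m-user unicast index coding instance with side-information sets A_i ⊆ {1,…,m}\{i}. Let φ : X^{mt} → X^r be a valid (t,r) index code for this instance. Suppose l_1,…,l_n ∈ {1,…,m} are distinct indices such that A_{l_j} ∩ {l_{j+1},…,l_n} = ∅ for every j ∈ {1,…,n} (i.e., {l_1,…,l_n} is an acyclic induced set). Then r ≥ n·t. -/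
theorem stmt10 {X : Type} [Fintype X] (hX : 2 ≤ Fintype.card X)
    (m t r n : ℕ) (hm : 0 < m) (ht : 0 < t) (hr : 0 < r)
    (A : Fin m → Finset (Fin m)) (hA : ∀ i, i ∉ A i)
    (φ : (Fin m → Fin t → X) → (Fin r → X))
    (hvalid : ∀ (i : Fin m) (x x' : Fin m → Fin t → X),
      φ x = φ x' → (∀ l ∈ A i, ∀ j, x l j = x' l j) → ∀ j, x i j = x' i j)
    (l : Fin n → Fin m) (hinj : Function.Injective l)
    (hacyc : ∀ j k : Fin n, j < k → l k ∉ A (l j)) :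
    n * t ≤ r := by
  have hne : Nonempty X := Fintype.card_pos_iff.mp (by omega)
  obtain ⟨x0⟩ := hne
  classical
  -- extend an assignment on the chain to all users
  set ext : (Fin n → Fin t → X) → Fin m → Fin t → X :=
    fun y i => if h : ∃ j, l j = i then y h.choose else fun _ => x0 with hext
  have hext_l : ∀ (y : Fin n → Fin t → X) (j : Fin n), ext y (l j) = y j := by
    intro y j
    have h : ∃ k, l k = l j := ⟨j, rfl⟩
    simp only [hext, dif_pos h]
    have := h.choose_spec
    have : h.choose = j := hinj this
    rw [this]
  -- the composed map is injective
  have hginj : Function.Injective (fun y => φ (ext y)) := by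
    intro y y' hφ
    simp only at hφ
    have key : ∀ N, ∀ j : Fin n, j.val < N → ∀ jj, ext y (l j) jj = ext y' (l j) jj := by
      intro N
      induction N with
      | zero => intro j hj; omega
      | succ N ih =>
        intro j hj
        apply hvalid (l j) (ext y) (ext y') hφ
        intro a ha jj
        by_cases h : ∃ k, l k = a
        · obtain ⟨k, rfl⟩ := h
          have hkj : k ≠ j := by rintro rfl; exact hA (l k) ha
          have hkj2 : ¬ j < k := fun hlt => hacyc j k hlt ha
          have hk : k < j := lt_of_le_of_ne (not_lt.mp hkj2) hkj
          exact ih k (by omega) jj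
        · simp only [hext, dif_neg h]
    have key : ∀ j : Fin n, ∀ jj, ext y (l j) jj = ext y' (l j) jj :=
      fun j => key (j.val + 1) j (by omega)
    funext j jj
    have := key j jj
    rwa [hext_l, hext_l] at this
  have hcard := Fintype.card_le_of_injective _ hginj
  simp only [Fintype.card_fun, Fintype.card_fin] at hcard
  have : Fintype.card X ^ (n * t) ≤ Fintype.card X ^ r := by
    rwa [mul_comm, pow_mul]
  exact (Nat.pow_le_pow_iff_right (by omega : 1 < Fintype.card X)).mp this
end

section
/- (Core of Proposition on odd characteristic) Let F be a field of characteristic different from 2 and t,r positive integers. Consider the 7-user instance I1' with interfering sets B_1'={2,3,5}, B_2'={3,4,7}, B_3'={4,5,6}, B_4'={1,5,7}, B_5'={2,6,7}, B_6'={1,2,4}, B_7'={1,3,6}. If an encoder matrix H ∈ F^{r×7t} with blocks H_1,…,H_7 ∈ F^{r×t} satisfies the decoding condition rank H_{{i}∪B_i'} = rank H_{B_i'} + t for every i ∈ {1,…,7}, then r > 3t. -/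
open Matrix

/-- Interfering sets of the 7-user instance `I1'` (0-based indexing:
user `i : Fin 7` corresponds to user `i+1` of the paper). -/
def I1'interf : Fin 7 → Finset (Fin 7) :=
  ![{1, 2, 4}, {2, 3, 6}, {3, 4, 5}, {0, 4, 6}, {1, 5, 6}, {0, 1, 3}, {0, 2, 5}]

/-!
Let `V i` be the column space of `H i` and `S i` the sum of the `V j`, `j ∈ B i`. The decoding
condition says that `V i` is `t`-dimensional and meets `S i` trivially. The sets `B i` are the
lines of the Fano plane, so any two distinct users lie in each other's interfering sets one way
or the other and the `V i` are pairwise independent. If `r ≤ 3t`, then `dim S i ≤ 2t`, hence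
`S i = V a ⊕ V b` for any two distinct `a, b ∈ B i`: the `V i` form a Fano configuration of
subspaces. Writing a vector of `V 6` in coordinates of `V 0 ⊕ V 1 ⊕ V 2` and following the lines
of the plane, its `V 2`-coordinate `x` satisfies `x + x = 0`; outside characteristic `2` this
forces the vector to vanish, contradicting `dim V 6 = t > 0`.
-/

section BlockRank

variable {F : Type} [Field F] {m r t : ℕ}

noncomputable def colSpan (H : Fin m → Matrix (Fin r) (Fin t) F) (l : Fin m) :
    Submodule F (Fin r → F) :=
  LinearMap.range (H l).mulVecLin

lemma blockRank_eq_finrank_sup_colSpan (H : Fin m → Matrix (Fin r) (Fin t) F)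
    (L : Finset (Fin m)) : blockRank H L = Module.finrank F ↥(L.sup (colSpan H)) := by
  suffices h : LinearMap.range (Matrix.of fun (k : Fin r) (p : {l // l ∈ L} × Fin t) =>
      H p.1.1 k p.2).mulVecLin = L.sup (colSpan H) by
    rw [blockRank, Matrix.rank, h]
  have hcols : Set.range (Matrix.of fun (k : Fin r) (p : {l // l ∈ L} × Fin t) =>
      H p.1.1 k p.2).col = ⋃ l : {l // l ∈ L}, Set.range (H l.1).col := by
    ext v
    simp only [Set.mem_iUnion, Set.mem_range]
    constructor
    · rintro ⟨⟨l, j⟩, rfl⟩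
      exact ⟨l, j, rfl⟩
    · rintro ⟨l, j, rfl⟩
      exact ⟨(l, j), rfl⟩
  simp only [colSpan, Matrix.range_mulVecLin, hcols, Submodule.span_iUnion, Finset.sup_eq_iSup,
    iSup_subtype]

end BlockRank

namespace Submodule

variable {K M : Type*} [DivisionRing K] [AddCommGroup M] [Module K M]

lemma finrank_eq_and_disjoint_of_finrank_sup_eq_add [FiniteDimensional K M]
    {A S : Submodule K M} {t : ℕ} (hA : Module.finrank K A ≤ t)
    (hsup : Module.finrank K ↥(A ⊔ S) = Module.finrank K S + t) :
    Module.finrank K A = t ∧ Disjoint A S := by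
  have hdim := finrank_sup_add_finrank_inf_eq A S
  have hA_eq : Module.finrank K A = t := by omega
  exact ⟨hA_eq, disjoint_iff.mpr (finrank_eq_zero.mp (by omega))⟩

lemma sup_eq_of_disjoint_of_finrank_le [FiniteDimensional K M] {A B S : Submodule K M}
    (hAB : Disjoint A B) (hle : A ⊔ B ≤ S)
    (hS : Module.finrank K S ≤ Module.finrank K A + Module.finrank K B) : A ⊔ B = S := by
  refine eq_of_le_of_finrank_le hle ?_
  have hdim := finrank_sup_add_finrank_inf_eq A B
  rw [hAB.eq_bot, finrank_bot] at hdim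
  omega

lemma eq_and_eq_of_add_eq_add {A B : Submodule K M} (hAB : Disjoint A B) {a a' b b' : M}
    (ha : a ∈ A) (ha' : a' ∈ A) (hb : b ∈ B) (hb' : b' ∈ B) (h : a + b = a' + b') :
    a = a' ∧ b = b' := by
  have hsub : a - a' = b' - b := by rw [sub_eq_sub_iff_add_eq_add, h, add_comm]
  have hzero : a - a' = 0 :=
    disjoint_def.mp hAB _ (sub_mem ha ha') (hsub ▸ sub_mem hb' hb)
  rw [sub_eq_zero] at hzero
  subst hzero
  exact ⟨rfl, add_left_cancel h⟩

lemma eq_and_eq_and_eq_of_add_add_eq_add_add {A B C : Submodule K M} (hA : Disjoint A (B ⊔ C))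
    (hBC : Disjoint B C) ⦃a a' b b' c c' : M⦄ (ha : a ∈ A) (ha' : a' ∈ A) (hb : b ∈ B)
    (hb' : b' ∈ B) (hc : c ∈ C) (hc' : c' ∈ C) (h : a + b + c = a' + b' + c') :
    a = a' ∧ b = b' ∧ c = c' := by
  rw [add_assoc, add_assoc] at h
  obtain ⟨rfl, hbc⟩ :=
    eq_and_eq_of_add_eq_add hA ha ha' (add_mem_sup hb hc) (add_mem_sup hb' hc') h
  exact ⟨rfl, eq_and_eq_of_add_eq_add hBC hb hb' hc hc' hbc⟩

lemma eq_of_add_mem_of_add_mem {A B : Submodule K M} (hAB : Disjoint A B) {a a' b : M}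
    (ha : a ∈ A) (ha' : a' ∈ A) (hb : b + a ∈ B) (hb' : b + a' ∈ B) : a = a' := by
  have h : a - a' ∈ B := by simpa using sub_mem hb hb'
  exact sub_eq_zero.mp (disjoint_def.mp hAB _ (sub_mem ha ha') h)

end Submodule

section Fano

variable {K M : Type*} [DivisionRing K] [AddCommGroup M] [Module K M]

lemma I1'interf_mem_or_mem {a b : Fin 7} (hab : a ≠ b) : b ∈ I1'interf a ∨ a ∈ I1'interf b := by
  revert a b
  decide

lemma pairwise_disjoint_of_disjoint_interf {V : Fin 7 → Submodule K M}
    (hdisj : ∀ i, Disjoint (V i) ((I1'interf i).sup V)) : Pairwise (Function.onFun Disjoint V) := by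
  intro a b hab
  rcases I1'interf_mem_or_mem hab with h | h
  · exact (hdisj a).mono_right (Finset.le_sup h)
  · exact ((hdisj b).mono_right (Finset.le_sup h)).symm

theorem eq_bot_of_fano_configuration (h2 : (2 : K) ≠ 0) (V : Fin 7 → Submodule K M)
    (hdisj : ∀ i, Disjoint (V i) ((I1'interf i).sup V))
    (hline : ∀ i a b c, a ∈ I1'interf i ∧ b ∈ I1'interf i ∧ c ∈ I1'interf i ∧ a ≠ b →
      V c ≤ V a ⊔ V b) :
    V 6 = ⊥ := by
  have hpair := pairwise_disjoint_of_disjoint_interf hdisj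
  have hindep : Disjoint (V 0) (V 1 ⊔ V 2) :=
    (hdisj 0).mono_right (sup_le (Finset.le_sup (by decide)) (Finset.le_sup (by decide)))
  have coord := Submodule.eq_and_eq_and_eq_of_add_add_eq_add_add hindep (@hpair 1 2 (by decide))
  refine (Submodule.eq_bot_iff _).mpr fun x hx => ?_
  obtain ⟨x0, hx0, y, h4, rfl⟩ := Submodule.mem_sup.mp (hline 3 0 4 6 (by decide) hx)
  obtain ⟨x1, hx1, x2, hx2, rfl⟩ := Submodule.mem_sup.mp (hline 0 1 2 4 (by decide) h4)
  have h5 : x0 + x2 ∈ V 5 := by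
    obtain ⟨y1, hy1, y5, hy5, hsum⟩ := Submodule.mem_sup.mp (hline 4 1 5 6 (by decide) hx)
    obtain ⟨y0, hy0, y2, hy2, rfl⟩ := Submodule.mem_sup.mp (hline 6 0 2 5 (by decide) hy5)
    obtain ⟨rfl, -, rfl⟩ := coord hx0 hy0 hx1 hy1 hx2 hy2 (by rw [add_assoc, ← hsum]; abel)
    exact hy5
  have h3 : x0 + x1 ∈ V 3 := by
    obtain ⟨y2, hy2, y3, hy3, hsum⟩ := Submodule.mem_sup.mp (hline 1 2 3 6 (by decide) hx)
    obtain ⟨y0, hy0, y1, hy1, rfl⟩ := Submodule.mem_sup.mp (hline 5 0 1 3 (by decide) hy3)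
    obtain ⟨rfl, rfl, -⟩ := coord hx0 hy0 hx1 hy1 hx2 hy2 (by rw [add_assoc, ← hsum]; abel)
    exact hy3
  obtain ⟨y4, hy4, y5, hy5, hsum⟩ := Submodule.mem_sup.mp (hline 2 4 5 3 (by decide) h3)
  obtain ⟨y1, hy1, y2, hy2, rfl⟩ := Submodule.mem_sup.mp (hline 0 1 2 4 (by decide) hy4)
  obtain ⟨y0, hy0, z2, hz2, rfl⟩ := Submodule.mem_sup.mp (hline 6 0 2 5 (by decide) hy5)
  obtain ⟨rfl, rfl, hzero⟩ := coord hx0 hy0 hx1 hy1 (zero_mem _) (add_mem hy2 hz2)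
    (by rw [add_zero, ← hsum]; abel)
  -- `V 4` and `V 5` both pin the `V 2`-coordinate of `x0 + x1` down to `x2`
  obtain rfl := Submodule.eq_of_add_mem_of_add_mem (@hpair 2 4 (by decide)) hx2 hy2 h4 hy4
  obtain rfl := Submodule.eq_of_add_mem_of_add_mem (@hpair 2 5 (by decide)) hx2 hz2 h5 hy5
  obtain rfl : x2 = 0 := by
    rw [← two_smul K, eq_comm, smul_eq_zero] at hzero
    exact hzero.resolve_left h2
  obtain rfl : x1 = 0 :=
    Submodule.disjoint_def.mp (@hpair 1 4 (by decide)) _ hx1 (by simpa using h4)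
  simpa using Submodule.disjoint_def.mp (@hpair 0 6 (by decide)) _ hx0 (by simpa using hx)

end Fano

theorem stmt11_general {F : Type} [Field F] (hF : ringChar F ≠ 2) (t r : ℕ) (ht : 0 < t)
    (H : Fin 7 → Matrix (Fin r) (Fin t) F)
    (hdec : ∀ i : Fin 7,
      blockRank H (insert i (I1'interf i)) = blockRank H (I1'interf i) + t) :
    3 * t < r := by
  by_contra! hr
  set V := colSpan H
  have hdec' : ∀ i, Module.finrank F ↥(V i ⊔ (I1'interf i).sup V) =
      Module.finrank F ↥((I1'interf i).sup V) + t := fun i => by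
    rw [← Finset.sup_insert, ← blockRank_eq_finrank_sup_colSpan,
      ← blockRank_eq_finrank_sup_colSpan]
    exact hdec i
  have hV : ∀ i, Module.finrank F (V i) = t ∧ Disjoint (V i) ((I1'interf i).sup V) := fun i =>
    Submodule.finrank_eq_and_disjoint_of_finrank_sup_eq_add (Matrix.rank_le_width _) (hdec' i)
  have hline : ∀ i a b c, a ∈ I1'interf i ∧ b ∈ I1'interf i ∧ c ∈ I1'interf i ∧ a ≠ b →
      V c ≤ V a ⊔ V b := by
    rintro i a b c ⟨ha, hb, hc, hab⟩
    have hS : Module.finrank F ↥((I1'interf i).sup V) ≤ t + t := by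
      have := Submodule.finrank_le (V i ⊔ (I1'interf i).sup V)
      rw [Module.finrank_fin_fun] at this
      linarith [hdec' i]
    rw [Submodule.sup_eq_of_disjoint_of_finrank_le
      (pairwise_disjoint_of_disjoint_interf (fun i => (hV i).2) hab)
      (sup_le (Finset.le_sup ha) (Finset.le_sup hb)) (by rwa [(hV a).1, (hV b).1])]
    exact Finset.le_sup hc
  have hV6 := eq_bot_of_fano_configuration (Ring.two_ne_zero hF) V (fun i => (hV i).2) hline
  have := (hV 6).1
  rw [hV6, finrank_bot] at this
  omega

theorem stmt11 {F : Type} [Field F] (hF : ringChar F ≠ 2) (t r : ℕ) (ht : 0 < t) (hr : 0 < r)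
    (H : Fin 7 → Matrix (Fin r) (Fin t) F)
    (hdec : ∀ i : Fin 7,
      blockRank H (insert i (I1'interf i)) = blockRank H (I1'interf i) + t) :
    3 * t < r :=
  stmt11_general hF t r ht H hdec
end

section
/- (Proposition: linear coding over odd characteristic is suboptimal for I1) Let F be a field of characteristic different from 2 and t,r positive integers. If an encoder matrix H ∈ F^{r×10t} with blocks H_1,…,H_10 ∈ F^{r×t} satisfies the decoding condition rank H_{{i}∪B_i} = rank H_{B_i} + t for every user i ∈ {1,…,10} of the instance I1, then r > 6t. Hence no linear index code over F of broadcast rate 6 exists for I1. -/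
/-! The column spaces `U i` of the blocks have dimension `t`, and each meets the span of its
interfering blocks trivially. Users `7, 8, 9` have no side information, so their blocks take up
`3t` dimensions independently of the others, leaving at most `3t` for `U 0, …, U 6` when
`r ≤ 6t`. The sets `B_i ∩ {0, …, 6}` are the lines of a Fano plane, and this lack of room forces
each line to span only `2t` dimensions, so the `U i` realise the Fano plane by `t`-dimensional
subspaces. Writing a vector of the point `U 6` as `a + b + c` in the frame `U 0 ⊕ U 1 ⊕ U 2`,
the three lines through `U 6` and the line `{3, 4, 5}` give `2c = 0`; outside characteristic `2`
this forces `c = 0`, then `a = b = 0`, so `U 6 = ⊥`. -/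

open Matrix

/-- Interfering sets of `I1`: `B_i = {1,…,10} \ (A_i ∪ {i})`. -/
def I1interf (i : Fin 10) : Finset (Fin 10) :=
  Finset.univ \ insert i (I1sideInfo i)

open Submodule Module

theorem sup_le_biSup {α ι : Type*} [CompleteLattice α] (f : ι → α) {s : Finset ι} {x y : ι}
    (hx : x ∈ s) (hy : y ∈ s) : f x ⊔ f y ≤ ⨆ l ∈ s, f l :=
  sup_le (le_iSup₂_of_le x hx le_rfl) (le_iSup₂_of_le y hy le_rfl)

section Lattice

variable {F V : Type*} [Field F] [AddCommGroup V] [Module F V] {U X Y Z : Submodule F V}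

theorem eq_of_add_eq_add_of_disjoint (h : Disjoint X Y) {x x' y y' : V} (hx : x ∈ X)
    (hx' : x' ∈ X) (hy : y ∈ Y) (hy' : y' ∈ Y) (heq : x + y = x' + y') : y = y' := by
  have hxy : x - x' = y' - y := by rw [sub_eq_sub_iff_add_eq_add, heq, add_comm]
  have := disjoint_def.1 h _ (sub_mem hx hx') (hxy ▸ sub_mem hy' hy)
  rw [hxy, sub_eq_zero] at this
  exact this.symm

variable [FiniteDimensional F V]

theorem finrank_sup_of_disjoint (h : Disjoint X Y) :
    finrank F ↥(X ⊔ Y) = finrank F X + finrank F Y := by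
  rw [← finrank_sup_add_finrank_inf_eq, h.eq_bot, finrank_bot, add_zero]

theorem finrank_eq_and_disjoint_of_finrank_sup_eq {t : ℕ} (hU : finrank F U ≤ t)
    (h : finrank F ↥(U ⊔ X) = finrank F X + t) : finrank F U = t ∧ Disjoint U X := by
  have := finrank_sup_add_finrank_inf_eq U X
  exact ⟨by omega, disjoint_iff.2 (finrank_eq_zero.1 (by omega))⟩

theorem le_sup_of_finrank_sup_le (h : finrank F ↥(X ⊔ Y ⊔ Z) ≤ finrank F ↥(X ⊔ Y)) :
    Z ≤ X ⊔ Y := by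
  rw [eq_of_le_of_finrank_le le_sup_left h]
  exact le_sup_right

end Lattice

/-- The hypotheses say that `U₀, …, U₆` realise the Fano plane with lines `{0,1,3}`, `{1,2,4}`,
`{0,2,5}`, `{3,4,5}`, `{0,4,6}`, `{2,3,6}`, `{1,5,6}` and frame `U₀, U₁, U₂`. -/
theorem fano_eq_bot {F V : Type*} [Field F] [AddCommGroup V] [Module F V]
    (hF : ringChar F ≠ 2) {U₀ U₁ U₂ U₃ U₄ U₅ U₆ : Submodule F V}
    (h₁₂ : Disjoint U₁ U₂) (h₀₁₂ : Disjoint U₀ (U₁ ⊔ U₂)) (h₂₃₄ : Disjoint U₂ (U₃ ⊔ U₄))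
    (h₀₅ : Disjoint U₀ U₅) (h₁₄ : Disjoint U₁ U₄)
    (h₃ : U₃ ≤ U₀ ⊔ U₁) (h₄ : U₄ ≤ U₁ ⊔ U₂) (h₅ : U₅ ≤ U₀ ⊔ U₂) (h₅' : U₅ ≤ U₃ ⊔ U₄)
    (h₆ : U₆ ≤ U₂ ⊔ U₃) (h₆' : U₆ ≤ U₀ ⊔ U₄) (h₆'' : U₆ ≤ U₁ ⊔ U₅) : U₆ = ⊥ := by
  have h₁₀₂ : Disjoint U₁ (U₀ ⊔ U₂) := by
    rw [sup_comm]
    exact h₁₂.disjoint_sup_right_of_disjoint_sup_left h₀₁₂.symm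
  refine (Submodule.eq_bot_iff _).2 fun v hv ↦ ?_
  -- write `v = a + b + c` along `U₀ ⊕ U₁ ⊕ U₂`; then `a + b ∈ U₃`, `b + c ∈ U₄`, `a + c ∈ U₅`,
  -- so `2c = (a + c) + (b + c) - (a + b)` lies in `U₂ ⊓ (U₃ ⊔ U₄) = ⊥`
  obtain ⟨c, hc, x₃, hx₃, rfl⟩ := mem_sup.1 (h₆ hv)
  obtain ⟨a, ha, b, hb, rfl⟩ := mem_sup.1 (h₃ hx₃)
  have hbc : b + c ∈ U₄ := by
    obtain ⟨a', ha', x₄, hx₄, hv⟩ := mem_sup.1 (h₆' hv)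
    have := eq_of_add_eq_add_of_disjoint h₀₁₂ ha' ha (h₄ hx₄)
      (add_mem (mem_sup_left hb) (mem_sup_right hc)) (by rw [hv]; abel)
    exact this ▸ hx₄
  have hac : a + c ∈ U₅ := by
    obtain ⟨b', hb', x₅, hx₅, hv⟩ := mem_sup.1 (h₆'' hv)
    have := eq_of_add_eq_add_of_disjoint h₁₀₂ hb' hb (h₅ hx₅)
      (add_mem (mem_sup_left ha) (mem_sup_right hc)) (by rw [hv]; abel)
    exact this ▸ hx₅
  have hc0 : c = 0 := by
    have h2c : (2 : F) • c = (a + c) + (b + c) - (a + b) := by rw [two_smul]; abel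
    have := disjoint_def.1 h₂₃₄ _ (smul_mem _ _ hc)
      (h2c ▸ sub_mem (add_mem (h₅' hac) (mem_sup_right hbc)) (mem_sup_left hx₃))
    exact (smul_eq_zero.1 this).resolve_left (Ring.two_ne_zero hF)
  subst hc0
  rw [add_zero] at hac hbc
  rw [disjoint_def.1 h₀₅ a ha hac, disjoint_def.1 h₁₄.symm b hbc hb, add_zero, add_zero]

/-- The points of a Fano plane whose lines are the sets `I1interf i ∩ I1fanoUsers`,
`i ∈ I1fanoUsers`. -/
def I1fanoUsers : Finset (Fin 10) := {0, 1, 2, 3, 4, 5, 6}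

/-- The decoding conditions of `I1`, with `U i` playing the column space of the block `H_i`. -/
def DecodesI1 {F V : Type*} [Field F] [AddCommGroup V] [Module F V]
    (U : Fin 10 → Submodule F V) (t : ℕ) : Prop :=
  ∀ i, finrank F (U i) ≤ t ∧
    finrank F ↥(U i ⊔ ⨆ l ∈ I1interf i, U l) = finrank F ↥(⨆ l ∈ I1interf i, U l) + t

namespace DecodesI1

variable {F V : Type*} [Field F] [AddCommGroup V] [Module F V] [FiniteDimensional F V]
  {U : Fin 10 → Submodule F V} {t : ℕ}

theorem finrank_eq (h : DecodesI1 U t) (i : Fin 10) : finrank F (U i) = t :=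
  (finrank_eq_and_disjoint_of_finrank_sup_eq (h i).1 (h i).2).1

theorem disjoint_of_le (h : DecodesI1 U t) {i : Fin 10} {X : Submodule F V}
    (hX : X ≤ ⨆ l ∈ I1interf i, U l) : Disjoint (U i) X :=
  (finrank_eq_and_disjoint_of_finrank_sup_eq (h i).1 (h i).2).2.mono_right hX

theorem finrank_sup_eq (h : DecodesI1 U t) {i : Fin 10} {X : Submodule F V}
    (hX : X ≤ ⨆ l ∈ I1interf i, U l) : finrank F ↥(U i ⊔ X) = t + finrank F X := by
  rw [finrank_sup_of_disjoint (h.disjoint_of_le hX), h.finrank_eq]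

theorem disjoint_of_ne (h : DecodesI1 U t) {x y : Fin 10} (hxy : x ≠ y) :
    Disjoint (U x) (U y) := by
  have key : ∀ x y : Fin 10, x ≠ y → y ∈ I1interf x ∨ x ∈ I1interf y := by decide
  rcases key x y hxy with hy | hx
  · exact h.disjoint_of_le (le_iSup₂_of_le y hy le_rfl)
  · exact (h.disjoint_of_le (le_iSup₂_of_le x hx le_rfl)).symm

/-- Users `7, 8, 9` have no side information, so their blocks are independent of all others. -/
theorem finrank_add_three_mul_le (h : DecodesI1 U t) {X : Submodule F V}
    (hX : X ≤ ⨆ l ∈ I1fanoUsers, U l) : finrank F X + 3 * t ≤ finrank F V := by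
  have h₇ : X ≤ ⨆ l ∈ I1interf 7, U l := hX.trans (biSup_mono (by decide))
  have h₈ : U 7 ⊔ X ≤ ⨆ l ∈ I1interf 8, U l :=
    sup_le (le_iSup₂_of_le 7 (by decide) le_rfl) (hX.trans (biSup_mono (by decide)))
  have h₉ : U 8 ⊔ (U 7 ⊔ X) ≤ ⨆ l ∈ I1interf 9, U l :=
    sup_le (le_iSup₂_of_le 8 (by decide) le_rfl)
      (sup_le (le_iSup₂_of_le 7 (by decide) le_rfl) (hX.trans (biSup_mono (by decide))))
  have := finrank_le (U 9 ⊔ (U 8 ⊔ (U 7 ⊔ X)))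
  rw [h.finrank_sup_eq h₉, h.finrank_sup_eq h₈, h.finrank_sup_eq h₇] at this
  omega

/-- If the ambient space is small, every line of the Fano plane spans only `2t` dimensions,
because the point `i` off the line adds `t` more. -/
theorem le_sup_of_line (h : DecodesI1 U t) (hV : finrank F V ≤ 6 * t) {i x y z : Fin 10}
    (hline : i ∈ I1fanoUsers ∧ {x, y, z} ⊆ I1interf i ∩ I1fanoUsers ∧ x ≠ y) :
    U z ≤ U x ⊔ U y := by
  obtain ⟨hi, hxyz, hxy⟩ := hline
  have hB : ⨆ l ∈ ({x, y, z} : Finset _), U l ≤ ⨆ l ∈ I1interf i, U l :=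
    biSup_mono fun l hl ↦ (Finset.mem_inter.1 (hxyz hl)).1
  have hlow : U i ⊔ ⨆ l ∈ ({x, y, z} : Finset _), U l ≤ ⨆ l ∈ I1fanoUsers, U l :=
    sup_le (le_iSup₂_of_le i hi le_rfl) (biSup_mono fun l hl ↦ (Finset.mem_inter.1 (hxyz hl)).2)
  have hrank := h.finrank_add_three_mul_le hlow
  rw [h.finrank_sup_eq hB, Finset.iSup_insert, Finset.iSup_insert, Finset.iSup_singleton,
    ← sup_assoc] at hrank
  have hrank_xy : finrank F ↥(U x ⊔ U y) = 2 * t := by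
    rw [finrank_sup_of_disjoint (h.disjoint_of_ne hxy), h.finrank_eq, h.finrank_eq, two_mul]
  exact le_sup_of_finrank_sup_le (by omega)

theorem six_mul_lt_finrank (h : DecodesI1 U t) (hF : ringChar F ≠ 2) (ht : 0 < t) :
    6 * t < finrank F V := by
  by_contra! hV
  have hU₆ : U 6 = ⊥ := fano_eq_bot hF (U₀ := U 0) (U₁ := U 1) (U₂ := U 2) (U₃ := U 3)
    (U₄ := U 4) (U₅ := U 5)
    (h.disjoint_of_ne (by decide)) (h.disjoint_of_le (sup_le_biSup U (by decide) (by decide)))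
    (h.disjoint_of_le (sup_le_biSup U (by decide) (by decide)))
    (h.disjoint_of_ne (by decide)) (h.disjoint_of_ne (by decide))
    (h.le_sup_of_line hV (i := 5) (by decide)) (h.le_sup_of_line hV (i := 0) (by decide))
    (h.le_sup_of_line hV (i := 6) (by decide)) (h.le_sup_of_line hV (i := 2) (by decide))
    (h.le_sup_of_line hV (i := 1) (by decide)) (h.le_sup_of_line hV (i := 3) (by decide))
    (h.le_sup_of_line hV (i := 4) (by decide))
  have := h.finrank_eq 6
  rw [hU₆, finrank_bot] at this
  omega

end DecodesI1

theorem blockRank_eq_finrank_iSup_span_cols {F : Type} [Field F] {m r t : ℕ}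
    (H : Fin m → Matrix (Fin r) (Fin t) F) (L : Finset (Fin m)) :
    blockRank H L = finrank F ↥(⨆ l ∈ L, span F (Set.range (H l).col)) := by
  have hcols :
      Set.range (Matrix.of fun (k : Fin r) (p : {l // l ∈ L} × Fin t) ↦ H p.1.1 k p.2).col =
        ⋃ l : {l // l ∈ L}, Set.range (H l).col := by
    ext v
    simp only [Set.mem_range, Set.mem_iUnion, Prod.exists]
    rfl
  rw [blockRank, rank_eq_finrank_span_cols, hcols, span_iUnion, iSup_subtype]

theorem stmt12_general {F : Type} [Field F] (hF : ringChar F ≠ 2) (t r : ℕ) (ht : 0 < t)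
    (H : Fin 10 → Matrix (Fin r) (Fin t) F)
    (hdec : ∀ i : Fin 10,
      blockRank H (insert i (I1interf i)) = blockRank H (I1interf i) + t) :
    6 * t < r := by
  have hcols : DecodesI1 (fun i ↦ span F (Set.range (H i).col)) t := fun i ↦ by
    refine ⟨rank_eq_finrank_span_cols (H i) ▸ rank_le_width (H i), ?_⟩
    have := hdec i
    rwa [blockRank_eq_finrank_iSup_span_cols, blockRank_eq_finrank_iSup_span_cols,
      Finset.iSup_insert] at this
  simpa only [finrank_fin_fun] using hcols.six_mul_lt_finrank hF ht

theorem stmt12 {F : Type} [Field F] (hF : ringChar F ≠ 2) (t r : ℕ) (ht : 0 < t) (hr : 0 < r)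
    (H : Fin 10 → Matrix (Fin r) (Fin t) F)
    (hdec : ∀ i : Fin 10,
      blockRank H (insert i (I1interf i)) = blockRank H (I1interf i) + t) :
    6 * t < r :=
  stmt12_general hF t r ht H hdec
end

section
/- (Theorem: linear coding over characteristic 2 is suboptimal for I2) Let F be a field of characteristic 2 and t,r positive integers. If an encoder matrix H ∈ F^{r×26t} with blocks H_1,…,H_26 ∈ F^{r×t} satisfies the decoding condition rank H_{{i}∪B_i} = rank H_{B_i} + t for every user i ∈ {1,…,26} of the instance I2, then r > 6t. Hence no linear index code over F of broadcast rate 6 exists for I2. -/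
open Matrix

/-- Interfering sets of the 26-user instance `I2` (0-based indexing:
user `i : Fin 26` corresponds to user `i+1` of the paper). -/
def I2interf : Fin 26 → Finset (Fin 26) :=
  ![{1, 2, 4, 10, 11, 12, 14, 21, 22, 23, 24, 25},
    {0, 2, 5, 10, 11, 12, 15, 20, 21, 23, 24, 25},
    {0, 1, 3, 10, 11, 12, 13, 20, 21, 22, 23, 25},
    {4, 5, 13, 14, 15},
    {3, 5, 13, 14, 15},
    {3, 4, 13, 14, 15},
    {16},
    {0, 4, 6, 10, 14, 16, 17},
    {1, 5, 6, 11, 15, 16, 18},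
    {2, 3, 6, 12, 13, 16, 19},
    {0, 1, 2, 4, 11, 12, 14, 20, 22, 23, 24, 25},
    {0, 1, 2, 5, 10, 12, 15, 20, 21, 22, 24, 25},
    {0, 1, 2, 3, 10, 11, 13, 20, 21, 22, 23, 24},
    {3}, {4}, {5}, {6},
    {0, 4, 6, 7, 10, 14, 16},
    {1, 5, 6, 8, 11, 15, 16},
    {2, 3, 6, 9, 12, 13, 16},
    {3, 5, 13, 15, 21},
    {3, 5, 13, 15, 20},
    {3, 4, 13, 14, 23},
    {3, 4, 13, 14, 22},
    {4, 5, 14, 15, 25},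
    {4, 5, 14, 15, 24}]

/-!
Write `C i` for the column space of `H_i` and, in the paper's numbering, `X_k = C_k + C_{k+10}`.
The decoding conditions make every `C_i` a `t`-dimensional space meeting the span of its
interfering blocks trivially; peeling users off one at a time shows that the pair spaces have
dimension `2t` and that `X₁, X₂, X₃` are independent. If `r ≤ 6t`, then `F^r = X₁ ⊕ X₂ ⊕ X₃`, and
counting dimensions for the pairs of users `k, k + 10` forces `X₄ ≤ X₁ + X₂`, `X₅ ≤ X₂ + X₃`,
`X₆ ≤ X₁ + X₃` (`k = 1, 2, 3`) and `X₇ ≤ X₁ + X₅, X₂ + X₆, X₃ + X₄` (`k = 8, 9, 10`). Users 25 and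
26 give `C_25 + C_26 = X₃` and hence `X₃ ∩ X₅ = 0`, so that `X₄ ≤ X₃ + X₇`. This is a Fano
configuration of subspaces, and in characteristic two it forces `X₄ ≤ X₅ + X₆`, contradicting the
decoding condition of user 4, whose interfering set contains users 5, 6, 15 and 16.
-/

open Module Submodule

theorem Submodule.finrank_sup_eq_add_iff_disjoint {K V : Type*} [DivisionRing K] [AddCommGroup V]
    [Module K V] [FiniteDimensional K V] {p q : Submodule K V} :
    finrank K ↥(p ⊔ q) = finrank K p + finrank K q ↔ Disjoint p q := by
  rw [← finrank_sup_add_finrank_inf_eq, disjoint_iff, ← finrank_eq_zero]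
  omega

theorem sup_inf_eq_of_disjoint {α : Type*} [Lattice α] [OrderBot α] [IsModularLattice α]
    {a b c : α} (h : Disjoint a c) (hb : b ≤ c) : (a ⊔ b) ⊓ c = b := by
  rw [sup_comm, sup_inf_assoc_of_le a hb, h.eq_bot, sup_bot_eq]

/-- The conclusion can fail outside characteristic two: the Fano plane is representable only in
characteristic two. -/
theorem le_sup_of_fano {R V : Type*} [Ring R] [CharP R 2] [AddCommGroup V] [Module R V]
    {X₁ X₂ X₃ X₄ X₅ X₆ X₇ : Submodule R V}
    (h₁ : Disjoint X₁ (X₂ ⊔ X₃)) (h₃ : Disjoint X₃ (X₁ ⊔ X₂))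
    (h₄ : X₄ ≤ X₁ ⊔ X₂) (h₅ : X₅ ≤ X₂ ⊔ X₃) (h₆ : X₆ ≤ X₁ ⊔ X₃)
    (h₇₁ : X₇ ≤ X₁ ⊔ X₅) (h₇₂ : X₇ ≤ X₂ ⊔ X₆) (h₄₇ : X₄ ≤ X₃ ⊔ X₇) :
    X₄ ≤ X₅ ⊔ X₆ := by
  intro v hv
  obtain ⟨z, hz, w, hw, rfl⟩ := mem_sup.mp (h₄₇ hv)
  obtain ⟨a, ha, s, hs, rfl⟩ := mem_sup.mp (h₇₁ hw)
  obtain ⟨b, hb, u, hu, hbu⟩ := mem_sup.mp (h₇₂ hw)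
  have hu' : u = a + s - b := eq_sub_of_add_eq' hbu
  suffices hx : z + (a + s) - (s + u) = 0 by
    rw [sub_eq_zero.mp hx]
    exact add_mem_sup hs hu
  have hx₁₃ : z + (a + s) - (s + u) ∈ X₁ ⊔ X₃ := by
    rw [show z + (a + s) - (s + u) = a + z - u by abel]
    exact sub_mem (add_mem (mem_sup_left ha) (mem_sup_right hz)) (h₆ hu)
  have hx₂₃ : z + (a + s) - (s + u) ∈ X₂ ⊔ X₃ := by
    rw [show z + (a + s) - (s + u) = b + z - s by rw [hu']; abel]
    exact sub_mem (add_mem (mem_sup_left hb) (mem_sup_right hz)) (h₅ hs)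
  have hx₁₂ : z + (a + s) - (s + u) ∈ X₁ ⊔ X₂ := by
    have hss : s + s = 0 := by rw [← two_smul R s, CharTwo.two_eq_zero, zero_smul]
    rw [show z + (a + s) - (s + u) = z + (a + s) - a + b - (s + s) by rw [hu']; abel,
      hss, sub_zero]
    exact add_mem (sub_mem (h₄ hv) (mem_sup_left ha)) (mem_sup_right hb)
  have hx₃ : z + (a + s) - (s + u) ∈ X₃ := by
    rw [← sup_inf_eq_of_disjoint h₁ le_sup_right]
    exact mem_inf.mpr ⟨hx₁₃, hx₂₃⟩
  exact disjoint_def.mp h₃ _ hx₃ hx₁₂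

section Decoding

variable {ι K V : Type*} [DivisionRing K] [AddCommGroup V] [Module K V]

/-- For a block `H_i` with `t` columns and column space `C i`, the condition
`rank H_{{i} ∪ B_i} = rank H_{B_i} + t` says exactly that `H_i` has rank `t` and that its column
space meets the span of the interfering blocks trivially. -/
structure DecodingCondition (C : ι → Submodule K V) (t : ℕ) (B : ι → Finset ι) : Prop where
  finrank_eq : ∀ i, finrank K (C i) = t
  disjoint : ∀ i, Disjoint (C i) ((B i).sup C)

namespace DecodingCondition

variable [FiniteDimensional K V] {C : ι → Submodule K V} {t : ℕ} {B : ι → Finset ι}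

theorem of_finrank_sup_eq (hle : ∀ i, finrank K (C i) ≤ t)
    (h : ∀ i, finrank K ↥(C i ⊔ (B i).sup C) = finrank K ↥((B i).sup C) + t) :
    DecodingCondition C t B := by
  have key : ∀ i, finrank K (C i) = t ∧ finrank K ↥(C i ⊓ (B i).sup C) = 0 := by
    intro i
    have := finrank_sup_add_finrank_inf_eq (C i) ((B i).sup C)
    have := hle i
    have := h i
    omega
  exact ⟨fun i => (key i).1, fun i => disjoint_iff.mpr (finrank_eq_zero.mp (key i).2)⟩

variable (hC : DecodingCondition C t B) {i j : ι} {L : Finset ι}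
include hC

theorem finrank_pair (hij : j ∈ B i) : finrank K ↥(C i ⊔ C j) = 2 * t := by
  rw [finrank_sup_eq_add_iff_disjoint.mpr ((hC.disjoint i).mono_right (Finset.le_sup hij)),
    hC.finrank_eq, hC.finrank_eq, two_mul]

variable [DecidableEq ι]

theorem finrank_sup_insert (hL : L ⊆ B i) :
    finrank K ↥((insert i L).sup C) = t + finrank K ↥(L.sup C) := by
  rw [Finset.sup_insert, finrank_sup_eq_add_iff_disjoint.mpr
    ((hC.disjoint i).mono_right (Finset.sup_mono hL)), hC.finrank_eq]

theorem finrank_sup_insert_insert (hij : insert j L ⊆ B i) (hj : L ⊆ B j) :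
    finrank K ↥((insert i (insert j L)).sup C) = 2 * t + finrank K ↥(L.sup C) := by
  rw [hC.finrank_sup_insert hij, hC.finrank_sup_insert hj]
  ring

theorem disjoint_pair (hij : insert j L ⊆ B i) (hj : L ⊆ B j) {P : Submodule K V}
    (hP : P ≤ L.sup C) : Disjoint (C i ⊔ C j) P := by
  refine (finrank_sup_eq_add_iff_disjoint.mp ?_).mono_right hP
  rw [hC.finrank_pair (hij (Finset.mem_insert_self j L)), ← hC.finrank_sup_insert_insert hij hj,
    Finset.sup_insert, Finset.sup_insert, sup_assoc]

theorem finset_sup_le_of_pair (hij : insert j L ⊆ B i) (hj : L ⊆ B j) {P : Submodule K V}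
    (hP : P ≤ L.sup C) (hV : finrank K V ≤ 2 * t + finrank K P) : L.sup C ≤ P := by
  have := hC.finrank_sup_insert_insert hij hj
  have := finrank_le ((insert i (insert j L)).sup C)
  exact (eq_of_le_of_finrank_le hP (by omega)).ge

end DecodingCondition

end Decoding

theorem blockRank_eq_finrank_sup {F : Type} [Field F] {m r t : ℕ}
    (H : Fin m → Matrix (Fin r) (Fin t) F) (L : Finset (Fin m)) :
    blockRank H L = finrank F ↥(L.sup fun l => LinearMap.range (H l).mulVecLin) := by
  have hcols : Set.range (of fun k (p : {l // l ∈ L} × Fin t) => H p.1.1 k p.2).col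
      = ⋃ l : {l // l ∈ L}, Set.range (H l).col := by
    ext v
    simp only [Set.mem_iUnion, Set.mem_range, Prod.exists]
    rfl
  rw [blockRank, Matrix.rank, Matrix.range_mulVecLin, hcols, Submodule.span_iUnion,
    Finset.sup_eq_iSup, iSup_subtype',
    iSup_congr fun l : {l // l ∈ L} => Matrix.range_mulVecLin (H l)]

theorem decodingCondition_range_mulVecLin {F : Type} [Field F] {m r t : ℕ}
    {H : Fin m → Matrix (Fin r) (Fin t) F} {B : Fin m → Finset (Fin m)}
    (hdec : ∀ i, blockRank H (insert i (B i)) = blockRank H (B i) + t) :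
    DecodingCondition (fun i => LinearMap.range (H i).mulVecLin) t B := by
  refine DecodingCondition.of_finrank_sup_eq (fun i => ?_) (fun i => ?_)
  · simpa [Matrix.rank] using (H i).rank_le_card_width
  · have := hdec i
    rw [blockRank_eq_finrank_sup, blockRank_eq_finrank_sup, Finset.sup_insert] at this
    exact this

section I2

variable {K V : Type*} [DivisionRing K] [AddCommGroup V] [Module K V] [FiniteDimensional K V]
  {C : Fin 26 → Submodule K V} {t : ℕ}

local notation "X₁" => C 0 ⊔ C 10
local notation "X₂" => C 1 ⊔ C 11
local notation "X₃" => C 2 ⊔ C 12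
local notation "X₄" => C 3 ⊔ C 13
local notation "X₅" => C 4 ⊔ C 14
local notation "X₆" => C 5 ⊔ C 15
local notation "X₇" => C 6 ⊔ C 16

theorem I2.disjoint_pairs (hC : DecodingCondition C t I2interf) :
    Disjoint X₁ (X₂ ⊔ X₃) ∧ Disjoint X₂ (X₁ ⊔ X₃) ∧ Disjoint X₃ (X₁ ⊔ X₂) :=
  ⟨hC.disjoint_pair (L := {1, 2, 11, 12}) (by decide) (by decide)
      (by simp [-Finset.sup_insert, Finset.le_sup]),
    hC.disjoint_pair (L := {0, 2, 10, 12}) (by decide) (by decide)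
      (by simp [-Finset.sup_insert, Finset.le_sup]),
    hC.disjoint_pair (L := {0, 1, 10, 11}) (by decide) (by decide)
      (by simp [-Finset.sup_insert, Finset.le_sup])⟩

theorem I2.finset_sup_le_pair_sup_pair (hC : DecodingCondition C t I2interf)
    (hV : finrank K V ≤ 6 * t) {i j a b c d : Fin 26} (L : Finset (Fin 26))
    (hij : insert j L ⊆ I2interf i) (hj : L ⊆ I2interf j) (hab : b ∈ I2interf a)
    (hcd : d ∈ I2interf c) (hdisj : Disjoint (C a ⊔ C b) (C c ⊔ C d))
    (hP : C a ⊔ C b ⊔ (C c ⊔ C d) ≤ L.sup C) :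
    L.sup C ≤ C a ⊔ C b ⊔ (C c ⊔ C d) := by
  refine hC.finset_sup_le_of_pair hij hj hP ?_
  rw [finrank_sup_eq_add_iff_disjoint.mpr hdisj, hC.finrank_pair hab, hC.finrank_pair hcd]
  omega

theorem I2.le_sup_pairs (hC : DecodingCondition C t I2interf) (hV : finrank K V ≤ 6 * t) :
    X₄ ≤ X₁ ⊔ X₂ ∧ X₅ ≤ X₂ ⊔ X₃ ∧ X₆ ≤ X₁ ⊔ X₃ ∧ C 24 ⊔ C 25 = X₃ := by
  obtain ⟨d₁, d₂, -⟩ := I2.disjoint_pairs hC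
  have h₁₂ := I2.finset_sup_le_pair_sup_pair hC hV {0, 1, 3, 10, 11, 13} (i := 2) (j := 12)
    (by decide) (by decide) (by decide) (by decide) (d₁.mono_right le_sup_left)
    (by simp [-Finset.sup_insert, Finset.le_sup])
  have h₂₃ := I2.finset_sup_le_pair_sup_pair hC hV {1, 2, 4, 11, 12, 14, 24, 25} (i := 0)
    (j := 10) (by decide) (by decide) (by decide) (by decide) (d₂.mono_right le_sup_right)
    (by simp [-Finset.sup_insert, Finset.le_sup])
  have h₁₃ := I2.finset_sup_le_pair_sup_pair hC hV {0, 2, 5, 10, 12, 15, 24, 25} (i := 1)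
    (j := 11) (by decide) (by decide) (by decide) (by decide) (d₁.mono_right le_sup_right)
    (by simp [-Finset.sup_insert, Finset.le_sup])
  have hW : C 24 ⊔ C 25 ≤ X₃ := by
    rw [← sup_inf_eq_of_disjoint d₁ (le_sup_right : X₃ ≤ X₂ ⊔ X₃)]
    exact le_inf ((sup_le (Finset.le_sup (by decide)) (Finset.le_sup (by decide))).trans h₁₃)
      ((sup_le (Finset.le_sup (by decide)) (Finset.le_sup (by decide))).trans h₂₃)
  refine ⟨(sup_le (Finset.le_sup (by decide)) (Finset.le_sup (by decide))).trans h₁₂,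
    (sup_le (Finset.le_sup (by decide)) (Finset.le_sup (by decide))).trans h₂₃,
    (sup_le (Finset.le_sup (by decide)) (Finset.le_sup (by decide))).trans h₁₃,
    eq_of_le_of_finrank_le hW ?_⟩
  rw [hC.finrank_pair (by decide), hC.finrank_pair (by decide)]

theorem I2.pair₇_le (hC : DecodingCondition C t I2interf) (hV : finrank K V ≤ 6 * t) :
    X₇ ≤ X₁ ⊔ X₅ ∧ X₇ ≤ X₂ ⊔ X₆ ∧ X₇ ≤ X₃ ⊔ X₄ := by
  obtain ⟨d₁, d₂, d₃⟩ := I2.disjoint_pairs hC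
  obtain ⟨h₄, h₅, h₆, -⟩ := I2.le_sup_pairs hC hV
  refine ⟨(sup_le (Finset.le_sup (by decide)) (Finset.le_sup (by decide))).trans
      (I2.finset_sup_le_pair_sup_pair hC hV {0, 4, 6, 10, 14, 16} (i := 7) (j := 17)
        (by decide) (by decide) (by decide) (by decide) (d₁.mono_right h₅)
        (by simp [-Finset.sup_insert, Finset.le_sup])),
    (sup_le (Finset.le_sup (by decide)) (Finset.le_sup (by decide))).trans
      (I2.finset_sup_le_pair_sup_pair hC hV {1, 5, 6, 11, 15, 16} (i := 8) (j := 18)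
        (by decide) (by decide) (by decide) (by decide) (d₂.mono_right h₆)
        (by simp [-Finset.sup_insert, Finset.le_sup])),
    (sup_le (Finset.le_sup (by decide)) (Finset.le_sup (by decide))).trans
      (I2.finset_sup_le_pair_sup_pair hC hV {2, 3, 6, 12, 13, 16} (i := 9) (j := 19)
        (by decide) (by decide) (by decide) (by decide) (d₃.mono_right h₄)
        (by simp [-Finset.sup_insert, Finset.le_sup]))⟩

theorem I2.pair₄_le (hC : DecodingCondition C t I2interf) (hV : finrank K V ≤ 6 * t) :
    X₄ ≤ X₃ ⊔ X₇ := by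
  obtain ⟨d₁, -, d₃⟩ := I2.disjoint_pairs hC
  obtain ⟨h₄, h₅, -, hW⟩ := I2.le_sup_pairs hC hV
  obtain ⟨h₇₁, -, h₇₃⟩ := I2.pair₇_le hC hV
  have d₃₅ : Disjoint X₃ X₅ := by
    rw [← hW]
    exact (hC.disjoint_pair (L := {4, 5, 14, 15}) (by decide) (by decide)
      (by simp [-Finset.sup_insert, Finset.le_sup])).mono_right (le_sup_left : X₅ ≤ X₅ ⊔ X₆)
  have d₃₇ : Disjoint X₃ X₇ := by
    rw [disjoint_iff_inf_le]
    calc X₃ ⊓ X₇ ≤ X₃ ⊓ ((X₁ ⊔ X₅) ⊓ (X₂ ⊔ X₃)) :=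
          le_inf inf_le_left (le_inf (inf_le_right.trans h₇₁) (inf_le_left.trans le_sup_right))
      _ = X₃ ⊓ X₅ := by rw [sup_inf_eq_of_disjoint d₁ h₅]
      _ = ⊥ := d₃₅.eq_bot
  have h₃₇ : X₃ ⊔ X₇ = X₃ ⊔ X₄ := by
    refine eq_of_le_of_finrank_le (sup_le le_sup_left h₇₃) ?_
    rw [finrank_sup_eq_add_iff_disjoint.mpr d₃₇, finrank_sup_eq_add_iff_disjoint.mpr
      (d₃.mono_right h₄), hC.finrank_pair (i := 2) (j := 12) (by decide),
      hC.finrank_pair (i := 3) (j := 13) (by decide), hC.finrank_pair (i := 6) (j := 16) (by decide)]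
  exact h₃₇ ▸ le_sup_right

theorem I2.false_of_finrank_le [CharP K 2] (hC : DecodingCondition C t I2interf) (ht : 0 < t)
    (hV : finrank K V ≤ 6 * t) : False := by
  obtain ⟨d₁, -, d₃⟩ := I2.disjoint_pairs hC
  obtain ⟨h₄, h₅, h₆, -⟩ := I2.le_sup_pairs hC hV
  obtain ⟨h₇₁, h₇₂, -⟩ := I2.pair₇_le hC hV
  have h₄₅₆ : X₄ ≤ X₅ ⊔ X₆ := le_sup_of_fano d₁ d₃ h₄ h₅ h₆ h₇₁ h₇₂ (I2.pair₄_le hC hV)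
  have hC₃ : C 3 = ⊥ := (hC.disjoint 3).eq_bot_of_le
    (le_sup_left.trans (h₄₅₆.trans (by simp [I2interf, -Finset.sup_insert, Finset.le_sup])))
  have := hC.finrank_eq 3
  rw [hC₃, finrank_bot] at this
  omega

end I2

theorem stmt13_general {F : Type} [Field F] (hF : ringChar F = 2) (t r : ℕ) (ht : 0 < t)
    (H : Fin 26 → Matrix (Fin r) (Fin t) F)
    (hdec : ∀ i : Fin 26,
      blockRank H (insert i (I2interf i)) = blockRank H (I2interf i) + t) :
    6 * t < r := by
  have := ringChar.of_eq hF
  by_contra! hr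
  exact I2.false_of_finrank_le (decodingCondition_range_mulVecLin hdec) ht (by simpa using hr)

theorem stmt13 {F : Type} [Field F] (hF : ringChar F = 2) (t r : ℕ) (ht : 0 < t) (hr : 0 < r)
    (H : Fin 26 → Matrix (Fin r) (Fin t) F)
    (hdec : ∀ i : Fin 26,
      blockRank H (insert i (I2interf i)) = blockRank H (I2interf i) + t) :
    6 * t < r :=
  stmt13_general hF t r ht H hdec
end

section
/- (Two-way connection achievability) Let (X,+) be a finite abelian group, t,r positive integers, and let I1 be an m1-user instance with side-information sets A_i^1 ⊆ {1,…,m1}\{i} and I2 an m2-user instance with side-information sets A_i^2 ⊆ {1,…,m2}\{i}. Let φ1: X^{m1·t} → X^r be a valid (t,r) index code for I1 and φ2: X^{m2·t} → X^r a valid (t,r) index code for I2. Define the two-way connection I = I1 ↔ I2 as the (m1+m2)-user instance with side-information sets A_i = A_i^1 ∪ {m1+1,…,m1+m2} for i ∈ {1,…,m1} and A_{m1+i} = {m1+j : j ∈ A_i^2} ∪ {1,…,m1} for i ∈ {1,…,m2}. Then the map φ(x^1,x^2) = φ1(x^1) + φ2(x^2) (componentwise sum in X^r), where x^1 ∈ X^{m1·t}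 and x^2 ∈ X^{m2·t}, is a valid (t,r) index code for I. -/
/-! A user of the first block knows the whole second block, so it can compute `φ2 x²` and cancel
it from `φ1 x¹ + φ2 x²`; what is left is the code `φ1`, which it decodes with its own side
information. Users of the second block are symmetric. -/

open Set

/-- User `i`'s message is the block `x i : β` (in the theorem, `β = Fin t → X`). -/
def IsIndexCode {ι β Y : Type*} (A : ι → Set ι) (φ : (ι → β) → Y) : Prop :=
  ∀ i x x', φ x = φ x' → (∀ l ∈ A i, x l = x' l) → x i = x' i

namespace IsIndexCode

variable {ι κ ν β Y : Type*} [AddCancelCommMonoid Y]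
  {A1 : ι → Set ι} {A2 : κ → Set κ} {φ1 : (ι → β) → Y} {φ2 : (κ → β) → Y}
  {e1 : ι → ν} {e2 : κ → ν}

theorem decode_add_left (h1 : IsIndexCode A1 φ1) {i : ι} {A : Set ν}
    (hA : e1 '' A1 i ∪ range e2 ⊆ A) {x x' : ν → β}
    (heq : φ1 (x ∘ e1) + φ2 (x ∘ e2) = φ1 (x' ∘ e1) + φ2 (x' ∘ e2))
    (hside : ∀ l ∈ A, x l = x' l) : x (e1 i) = x' (e1 i) := by
  have hknown : x ∘ e2 = x' ∘ e2 := funext fun l => hside _ (hA (.inr ⟨l, rfl⟩))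
  rw [hknown] at heq
  exact h1 i _ _ (add_right_cancel heq) fun l hl => hside _ (hA (.inl ⟨l, hl, rfl⟩))

theorem two_way_connection {A : ν → Set ν} (h1 : IsIndexCode A1 φ1) (h2 : IsIndexCode A2 φ2)
    (hcover : ∀ v, (∃ i, e1 i = v) ∨ ∃ i, e2 i = v)
    (hA1 : ∀ i, e1 '' A1 i ∪ range e2 ⊆ A (e1 i))
    (hA2 : ∀ i, e2 '' A2 i ∪ range e1 ⊆ A (e2 i)) :
    IsIndexCode A fun x => φ1 (x ∘ e1) + φ2 (x ∘ e2) := by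
  intro v x x' heq hside
  rcases hcover v with ⟨i, rfl⟩ | ⟨i, rfl⟩
  · exact h1.decode_add_left (hA1 i) heq hside
  · exact h2.decode_add_left (hA2 i) (by rwa [add_comm, add_comm (φ2 _)]) hside

end IsIndexCode

theorem stmt17_general {X : Type} [AddCommGroup X]
    (m1 m2 t r : ℕ)
    (A1 : Fin m1 → Finset (Fin m1))
    (A2 : Fin m2 → Finset (Fin m2))
    (φ1 : (Fin m1 → Fin t → X) → (Fin r → X))
    (hφ1 : ∀ (i : Fin m1) (x x' : Fin m1 → Fin t → X),
      φ1 x = φ1 x' → (∀ l ∈ A1 i, ∀ j, x l j = x' l j) → ∀ j, x i j = x' i j)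
    (φ2 : (Fin m2 → Fin t → X) → (Fin r → X))
    (hφ2 : ∀ (i : Fin m2) (x x' : Fin m2 → Fin t → X),
      φ2 x = φ2 x' → (∀ l ∈ A2 i, ∀ j, x l j = x' l j) → ∀ j, x i j = x' i j)
    -- the side-information sets of the two-way connection `I = I1 ↔ I2`
    (A : Fin (m1 + m2) → Finset (Fin (m1 + m2)))
    (hAleft : ∀ i : Fin m1, A (Fin.castAdd m2 i)
      = (A1 i).image (Fin.castAdd m2) ∪ Finset.univ.image (Fin.natAdd m1))
    (hAright : ∀ i : Fin m2, A (Fin.natAdd m1 i)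
      = (A2 i).image (Fin.natAdd m1) ∪ Finset.univ.image (Fin.castAdd m2))
    -- the combined code `φ(x¹, x²) = φ1(x¹) + φ2(x²)`
    (φ : (Fin (m1 + m2) → Fin t → X) → (Fin r → X))
    (hφ : ∀ x : Fin (m1 + m2) → Fin t → X, φ x = fun k =>
      φ1 (fun l => x (Fin.castAdd m2 l)) k + φ2 (fun l => x (Fin.natAdd m1 l)) k) :
    ∀ (i : Fin (m1 + m2)) (x x' : Fin (m1 + m2) → Fin t → X),
      φ x = φ x' → (∀ l ∈ A i, ∀ j, x l j = x' l j) → ∀ j, x i j = x' i j := by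
  have h1 : IsIndexCode (fun i => ↑(A1 i)) φ1 := fun i x x' h hside =>
    funext (hφ1 i x x' h fun l hl => congrFun (hside l hl))
  have h2 : IsIndexCode (fun i => ↑(A2 i)) φ2 := fun i x x' h hside =>
    funext (hφ2 i x x' h fun l hl => congrFun (hside l hl))
  have hsum : φ = fun x => φ1 (x ∘ Fin.castAdd m2) + φ2 (x ∘ Fin.natAdd m1) := funext hφ
  have hcode : IsIndexCode (fun i => ↑(A i)) φ := by
    rw [hsum]
    refine h1.two_way_connection h2 (fun v => ?_) (fun i => ?_) (fun i => ?_)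
    · induction v using Fin.addCases <;> simp
    · simp [hAleft]
    · simp [hAright]
  exact fun i x x' h hside => congrFun (hcode i x x' h fun l hl => funext (hside l hl))

theorem stmt17 {X : Type} [Fintype X] [AddCommGroup X]
    (m1 m2 t r : ℕ) (hm1 : 0 < m1) (hm2 : 0 < m2) (ht : 0 < t) (hr : 0 < r)
    (A1 : Fin m1 → Finset (Fin m1)) (hA1 : ∀ i, i ∉ A1 i)
    (A2 : Fin m2 → Finset (Fin m2)) (hA2 : ∀ i, i ∉ A2 i)
    (φ1 : (Fin m1 → Fin t → X) → (Fin r → X))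
    (hφ1 : ∀ (i : Fin m1) (x x' : Fin m1 → Fin t → X),
      φ1 x = φ1 x' → (∀ l ∈ A1 i, ∀ j, x l j = x' l j) → ∀ j, x i j = x' i j)
    (φ2 : (Fin m2 → Fin t → X) → (Fin r → X))
    (hφ2 : ∀ (i : Fin m2) (x x' : Fin m2 → Fin t → X),
      φ2 x = φ2 x' → (∀ l ∈ A2 i, ∀ j, x l j = x' l j) → ∀ j, x i j = x' i j)
    -- the side-information sets of the two-way connection `I = I1 ↔ I2`
    (A : Fin (m1 + m2) → Finset (Fin (m1 + m2)))
    (hAleft : ∀ i : Fin m1, A (Fin.castAdd m2 i)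
      = (A1 i).image (Fin.castAdd m2) ∪ Finset.univ.image (Fin.natAdd m1))
    (hAright : ∀ i : Fin m2, A (Fin.natAdd m1 i)
      = (A2 i).image (Fin.natAdd m1) ∪ Finset.univ.image (Fin.castAdd m2))
    -- the combined code `φ(x¹, x²) = φ1(x¹) + φ2(x²)`
    (φ : (Fin (m1 + m2) → Fin t → X) → (Fin r → X))
    (hφ : ∀ x : Fin (m1 + m2) → Fin t → X, φ x = fun k =>
      φ1 (fun l => x (Fin.castAdd m2 l)) k + φ2 (fun l => x (Fin.natAdd m1 l)) k) :
    ∀ (i : Fin (m1 + m2)) (x x' : Fin (m1 + m2) → Fin t → X),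
      φ x = φ x' → (∀ l ∈ A i, ∀ j, x l j = x' l j) → ∀ j, x i j = x' i j :=
  stmt17_general m1 m2 t r A1 A2 φ1 hφ1 φ2 hφ2 A hAleft hAright φ hφ
end
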